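/- arXiv:2508.02701 — 8 statements merged into one kernel-verified Lean document; each statement's English description precedes it below -/
import Mathlib

section
/- For every positive integer n, r(n) = 4·∑_{d | n} χ₄(d), where r(n) is the number of pairs (a,b) ∈ ℤ² with a² + b² = n and χ₄ is the non-principal Dirichlet character modulo 4. -/
open Zsqrtd GaussianInt

namespace TwoSq

def S (n : ℕ) : Set (GaussianInt) := {z | z.norm = (n : ℤ)}

lemma finite_S (n : ℕ) : (S n).Finite := by
  have : S n ⊆ ↑(((Finset.Icc (-(n:ℤ)) n) ×ˢ (Finset.Icc (-(n:ℤ)) n)).image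
      (fun p : ℤ × ℤ => (⟨p.1, p.2⟩ : GaussianInt))) := by
    intro z hz
    simp only [Finset.coe_image, Set.mem_image, Finset.mem_coe, Finset.mem_product,
      Finset.mem_Icc]
    refine ⟨(z.re, z.im), ?_, by ext <;> rfl⟩
    have h : z.re * z.re + z.im * z.im = (n : ℤ) := by
      have := hz; simpa [S, Zsqrtd.norm_def] using this
    have h1 : z.re * z.re ≤ (n:ℤ) := by nlinarith [mul_self_nonneg z.im]
    have h2 : z.im * z.im ≤ (n:ℤ) := by nlinarith [mul_self_nonneg z.re]
    constructor <;> constructor <;> nlinarith [Int.le_self_sq z.re, Int.le_self_sq z.im,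
      sq_nonneg z.re, sq_nonneg z.im]
  exact Set.Finite.subset (Finset.finite_toSet _) this


lemma ncard_S_one : (S 1).ncard = 4 := by
  have : S 1 = ↑({⟨1,0⟩, ⟨-1,0⟩, ⟨0,1⟩, ⟨0,-1⟩} : Finset GaussianInt) := by
    ext z
    simp only [S, Set.mem_setOf_eq, Finset.coe_insert, Set.mem_insert_iff, Finset.coe_singleton,
      Set.mem_singleton_iff]
    constructor
    · intro h
      have h' : z.re * z.re + z.im * z.im = 1 := by simpa [Zsqrtd.norm_def] using h
      obtain ⟨a, b⟩ := z
      simp only at h'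
      have h1 : -1 ≤ a := by nlinarith [mul_self_nonneg b]
      have h1' : a ≤ 1 := by nlinarith [mul_self_nonneg b]
      have h2 : -1 ≤ b := by nlinarith [mul_self_nonneg a]
      have h2' : b ≤ 1 := by nlinarith [mul_self_nonneg a]
      simp only [Zsqrtd.ext_iff]
      interval_cases a <;> interval_cases b <;> simp_all
    · rintro (rfl|rfl|rfl|rfl) <;> simp [Zsqrtd.norm_def]
  rw [this, Set.ncard_coe_finset]
  decide

lemma prime_of_norm_prime {π : GaussianInt} (hp : Prime π.norm.natAbs) : Prime π := by
  rw [← UniqueFactorizationMonoid.irreducible_iff_prime]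
  constructor
  · intro hu
    rw [← Zsqrtd.norm_eq_one_iff] at hu
    rw [hu] at hp; exact hp.not_unit isUnit_one
  · intro a b hab
    have h : a.norm.natAbs * b.norm.natAbs = π.norm.natAbs := by
      rw [← Int.natAbs_mul, ← Zsqrtd.norm_mul, ← hab]
    rw [← h] at hp
    rw [← Nat.prime_iff] at hp
    rcases Nat.prime_mul_iff.mp hp with ⟨_, hb⟩ | ⟨_, ha⟩
    · exact Or.inr (Zsqrtd.norm_eq_one_iff.mp hb)
    · exact Or.inl (Zsqrtd.norm_eq_one_iff.mp ha)


lemma norm_cast_eq (z : GaussianInt) : ((z.norm : GaussianInt)) = z * star z :=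
  Zsqrtd.norm_eq_mul_conj z

lemma dvd_or_conj_dvd {c : GaussianInt} (hc : Prime c) {n : ℕ}
    (hn : c ∣ (n : GaussianInt)) {z : GaussianInt} (hz : z ∈ S n) :
    c ∣ z ∨ star c ∣ z := by
  have h : (n : GaussianInt) = z * star z := by
    have := Zsqrtd.norm_eq_mul_conj z
    rw [hz] at this
    simpa using this
  rcases hc.dvd_or_dvd (h ▸ hn) with h' | h'
  · exact Or.inl h'
  · right
    obtain ⟨w, hw⟩ := h'
    exact ⟨star w, by rw [← star_star z, hw, star_mul']⟩

lemma S_descend {c : GaussianInt} {q n : ℕ} (hq : c.norm = (q : ℤ)) (hq0 : 0 < q)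
    (hqn : q ∣ n) (hdvd : ∀ z ∈ S n, c ∣ z) :
    S n = (fun w => c * w) '' S (n / q) := by
  have hc0 : c ≠ 0 := by
    intro h; rw [h] at hq; simp at hq; omega
  ext z
  constructor
  · intro hz
    obtain ⟨w, rfl⟩ := hdvd z hz
    refine ⟨w, ?_, rfl⟩
    have hz' : (q : ℤ) * w.norm = (n : ℤ) := by
      rw [← hq, ← Zsqrtd.norm_mul]; exact hz
    have : (q : ℤ) * w.norm = (q : ℤ) * ((n / q : ℕ) : ℤ) := by
      rw [hz']; norm_cast; exact (Nat.mul_div_cancel' hqn).symm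
    exact mul_left_cancel₀ (by exact_mod_cast hq0.ne') this
  · rintro ⟨w, hw, rfl⟩
    show (c * w).norm = (n : ℤ)
    rw [Zsqrtd.norm_mul, hq, hw]
    norm_cast
    exact Nat.mul_div_cancel' hqn

lemma ncard_S_descend {c : GaussianInt} {q n : ℕ} (hq : c.norm = (q : ℤ)) (hq0 : 0 < q)
    (hqn : q ∣ n) (hdvd : ∀ z ∈ S n, c ∣ z) :
    (S n).ncard = (S (n / q)).ncard := by
  have hc0 : c ≠ 0 := by intro h; rw [h] at hq; simp at hq; omega
  rw [S_descend hq hq0 hqn hdvd]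
  exact Set.ncard_image_of_injective _ (mul_right_injective₀ hc0)


lemma norm_one_cases {z : GaussianInt} (h : z.norm = 1) :
    z = 1 ∨ z = -1 ∨ z = ⟨0,1⟩ ∨ z = ⟨0,-1⟩ := by
  obtain ⟨a, b⟩ := z
  have h' : a * a + b * b = 1 := by simpa [Zsqrtd.norm_def] using h
  have h1 : -1 ≤ a := by nlinarith [mul_self_nonneg b]
  have h1' : a ≤ 1 := by nlinarith [mul_self_nonneg b]
  have h2 : -1 ≤ b := by nlinarith [mul_self_nonneg a]
  have h2' : b ≤ 1 := by nlinarith [mul_self_nonneg a]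
  simp only [Zsqrtd.ext_iff]
  interval_cases a <;> interval_cases b <;> simp_all

/-- A Gaussian prime of norm `p ≡ 1 [4]` does not divide its conjugate. -/
lemma not_dvd_star {p : ℕ} (hp : p.Prime) (hp1 : p % 4 = 1) {a b : ℤ}
    (hab : (⟨a,b⟩ : GaussianInt).norm = (p : ℤ)) :
    ¬ (⟨a,b⟩ : GaussianInt) ∣ star (⟨a,b⟩ : GaussianInt) := by
  rintro ⟨u, hu⟩
  set π : GaussianInt := ⟨a,b⟩ with hπ
  have hnu : u.norm = 1 := by
    have h1 : π.norm * u.norm = π.norm := by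
      rw [← Zsqrtd.norm_mul, ← hu, Zsqrtd.norm_conj]
    have hπ0 : π.norm ≠ 0 := by rw [hab]; exact_mod_cast hp.pos.ne'
    exact mul_left_cancel₀ hπ0 (by rw [h1, mul_one])
  have hsq : ∀ c : ℤ, c * c ≠ (p:ℤ) := by
    intro c hc
    have hc' : c.natAbs * c.natAbs = p := by
      rw [← Int.natAbs_mul]; exact_mod_cast congrArg Int.natAbs hc
    rcases (Nat.prime_mul_iff.mp (hc' ▸ hp)) with ⟨h, h2⟩ | ⟨h, h2⟩ <;> rw [h2] at hc' <;>
      simp at hc' <;> (have := hp.two_le; omega)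
  have hab' : a * a + b * b = (p:ℤ) := by simpa [Zsqrtd.norm_def] using hab
  have hodd : (p:ℤ) % 2 = 1 := by omega
  have hu' : star π = π * u := hu
  rw [Zsqrtd.ext_iff] at hu'
  simp only [hπ, Zsqrtd.re_star, Zsqrtd.im_star, Zsqrtd.re_mul, Zsqrtd.im_mul] at hu'
  rcases norm_one_cases hnu with rfl | rfl | rfl | rfl <;>
      simp only [Zsqrtd.re_one, Zsqrtd.im_one, Zsqrtd.re_neg, Zsqrtd.im_neg] at hu'
  · -- star π = π : b = 0
    have hb : b = 0 := by omega
    exact hsq a (by rw [← hab', hb]; ring)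
  · have ha : a = 0 := by omega
    exact hsq b (by rw [← hab', ha]; ring)
  · -- a = -b
    have : a = -b := by omega
    have h2 : 2 * (b * b) = (p:ℤ) := by rw [← hab', this]; ring
    omega
  · have : a = b := by omega
    have h2 : 2 * (b * b) = (p:ℤ) := by rw [← hab', this]; ring
    omega

lemma mem_S_div {c w : GaussianInt} {q n : ℕ} (hq : c.norm = (q : ℤ)) (hq0 : 0 < q)
    (hqn : q ∣ n) (hz : c * w ∈ S n) : w ∈ S (n / q) := by
  have hz' : (q : ℤ) * w.norm = (n : ℤ) := by rw [← hq, ← Zsqrtd.norm_mul]; exact hz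
  have : (q : ℤ) * w.norm = (q : ℤ) * ((n / q : ℕ) : ℤ) := by
    rw [hz']; norm_cast; exact (Nat.mul_div_cancel' hqn).symm
  exact mul_left_cancel₀ (by exact_mod_cast hq0.ne') this

lemma mem_S_mul {c w : GaussianInt} {q n : ℕ} (hq : c.norm = (q : ℤ))
    (hqn : q ∣ n) (hw : w ∈ S (n / q)) : c * w ∈ S n := by
  show (c * w).norm = (n : ℤ)
  rw [Zsqrtd.norm_mul, hq, hw]
  norm_cast
  exact Nat.mul_div_cancel' hqn

/-- descent at 2 -/
lemma ncard_S_two {n : ℕ} (hn : 2 ∣ n) : (S n).ncard = (S (n / 2)).ncard := by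
  have hnorm : (⟨1,1⟩ : GaussianInt).norm = ((2:ℕ) : ℤ) := by simp [Zsqrtd.norm_def]
  have hc : Prime (⟨1,1⟩ : GaussianInt) := by
    apply prime_of_norm_prime; rw [hnorm]; norm_num; exact Nat.prime_two.prime
  refine ncard_S_descend hnorm (by norm_num) hn ?_
  intro z hz
  have h2 : (⟨1,1⟩ : GaussianInt) ∣ ((n : ℕ) : GaussianInt) := by
    obtain ⟨k, rfl⟩ := hn
    have : ((2 : ℕ) : GaussianInt) = ⟨1,1⟩ * star ⟨1,1⟩ := by
      have := Zsqrtd.norm_eq_mul_conj (⟨1,1⟩ : GaussianInt)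
      rw [hnorm] at this; exact_mod_cast this
    exact Dvd.dvd.trans ⟨star ⟨1,1⟩, this⟩ (by push_cast; exact Dvd.intro _ rfl)
  rcases dvd_or_conj_dvd hc h2 hz with h | h
  · exact h
  · refine dvd_trans ⟨⟨0,-1⟩, ?_⟩ h
    ext <;> simp [Zsqrtd.ext_iff, Zsqrtd.re_mul, Zsqrtd.im_mul]

/-- descent at p ≡ 3 [4], everything divisible by p -/
lemma p3_dvd {p n : ℕ} (hp : p.Prime) (hp3 : p % 4 = 3) (hn : p ∣ n) :
    ∀ z ∈ S n, (p : GaussianInt) ∣ z := by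
  haveI : Fact p.Prime := ⟨hp⟩
  have hprime : Prime ((p : ℕ) : GaussianInt) :=
    (GaussianInt.prime_iff_mod_four_eq_three_of_nat_prime p).mpr hp3
  intro z hz
  rcases dvd_or_conj_dvd hprime (by exact_mod_cast (map_dvd (Nat.castRingHom _) hn)) hz
    with h | h
  · exact h
  · simpa using h

lemma ncard_S_p3 {p n : ℕ} (hp : p.Prime) (hp3 : p % 4 = 3) (hn : p ^ 2 ∣ n) :
    (S n).ncard = (S (n / p ^ 2)).ncard := by
  have hnorm : ((p : ℕ) : GaussianInt).norm = ((p ^ 2 : ℕ) : ℤ) := by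
    rw [Zsqrtd.norm_natCast]; push_cast; ring
  exact ncard_S_descend hnorm (pow_pos hp.pos 2) hn
    (p3_dvd hp hp3 (dvd_trans (dvd_pow_self p two_ne_zero) hn))

lemma S_p3_empty {p n : ℕ} (hp : p.Prime) (hp3 : p % 4 = 3) (hn : p ∣ n)
    (hn2 : ¬ p ^ 2 ∣ n) : S n = ∅ := by
  rw [Set.eq_empty_iff_forall_notMem]
  intro z hz
  obtain ⟨w, rfl⟩ := p3_dvd hp hp3 hn z hz
  apply hn2
  have : ((p:ℤ))^2 ∣ (n : ℤ) := by
    refine ⟨w.norm, ?_⟩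
    rw [← hz, Zsqrtd.norm_mul, Zsqrtd.norm_natCast]; ring
  exact_mod_cast this


section P1
variable {p : ℕ} {π : GaussianInt} (hp : p.Prime) (hπ : π.norm = (p : ℤ))
  (hstar : ¬ π ∣ star π)

/-- the "π-free" part of `S n` -/
def B (π : GaussianInt) (n : ℕ) : Set GaussianInt := {z ∈ S n | ¬ π ∣ z}

include hp hπ in
lemma prime_pi : Prime π := by
  apply prime_of_norm_prime
  rw [hπ]; simpa using hp.prime

include hp hπ in
lemma pi_dvd_cast {n : ℕ} (hn : p ∣ n) : π ∣ ((n : ℕ) : GaussianInt) := by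
  have h1 : ((p : ℕ) : GaussianInt) = π * star π := by
    have := Zsqrtd.norm_eq_mul_conj π
    rw [hπ] at this; exact_mod_cast this
  exact dvd_trans ⟨star π, h1⟩ (by exact_mod_cast (map_dvd (Nat.castRingHom _) hn))

include hp hπ hstar in
lemma B_descend {n : ℕ} (hn : p ∣ n) :
    B π n = (fun w => star π * w) '' B π (n / p) := by
  have hπ' : Prime π := prime_pi hp hπ
  have hsnorm : (star π).norm = (p : ℤ) := by rw [Zsqrtd.norm_conj, hπ]
  ext z
  constructor
  · rintro ⟨hz, hdvd⟩
    have := dvd_or_conj_dvd hπ' (pi_dvd_cast hp hπ hn) hz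
    rcases this with h | h
    · exact absurd h hdvd
    · obtain ⟨w, rfl⟩ := h
      refine ⟨w, ⟨mem_S_div hsnorm hp.pos hn hz, fun hw => hdvd (hw.mul_left _)⟩, rfl⟩
  · rintro ⟨w, ⟨hw, hwd⟩, rfl⟩
    refine ⟨mem_S_mul hsnorm hn hw, fun hd => ?_⟩
    rcases hπ'.dvd_or_dvd hd with h | h
    · exact hstar h
    · exact hwd h

include hp hπ in
lemma A_descend {n : ℕ} (hn : p ∣ n) :
    {z ∈ S n | π ∣ z} = (fun w => π * w) '' S (n / p) := by
  ext z
  constructor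
  · rintro ⟨hz, w, rfl⟩
    exact ⟨w, mem_S_div hπ hp.pos hn hz, rfl⟩
  · rintro ⟨w, hw, rfl⟩
    exact ⟨mem_S_mul hπ hn hw, dvd_mul_right _ _⟩

include hp hπ hstar in
lemma ncard_S_p1_split {n : ℕ} (hn : p ∣ n) :
    (S n).ncard = (S (n / p)).ncard + (B π (n / p)).ncard := by
  have hπ0 : π ≠ 0 := by
    intro h; rw [h] at hπ; simp at hπ; exact hp.pos.ne' (by exact_mod_cast hπ.symm)
  have hsπ0 : star π ≠ 0 := by simpa using hπ0
  have hsplit : S n = {z ∈ S n | π ∣ z} ∪ B π n := by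
    ext z; by_cases h : π ∣ z <;> simp [B, h]
  have hdisj : Disjoint {z ∈ S n | π ∣ z} (B π n) := by
    rw [Set.disjoint_iff_inter_eq_empty]
    ext z; simp only [Set.mem_inter_iff, B, Set.mem_setOf_eq, Set.mem_empty_iff_false, iff_false]
    rintro ⟨⟨_, h⟩, _, h'⟩; exact h' h
  rw [hsplit, Set.ncard_union_eq hdisj ((finite_S n).subset (Set.sep_subset _ _))
    ((finite_S n).subset (Set.sep_subset _ _)),
    A_descend hp hπ hn, B_descend hp hπ hstar hn,
    Set.ncard_image_of_injective _ (mul_right_injective₀ hπ0),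
    Set.ncard_image_of_injective _ (mul_right_injective₀ hsπ0)]

include hp hπ hstar in
lemma ncard_B_descend {n : ℕ} (hn : p ∣ n) : (B π n).ncard = (B π (n / p)).ncard := by
  have hsπ0 : star π ≠ 0 := by
    simp only [ne_eq, star_eq_zero]
    intro h; rw [h] at hπ; simp at hπ; exact hp.pos.ne' (by exact_mod_cast hπ.symm)
  rw [B_descend hp hπ hstar hn, Set.ncard_image_of_injective _ (mul_right_injective₀ hsπ0)]

include hπ in
lemma B_eq_S {m : ℕ} (hm : ¬ p ∣ m) : B π m = S m := by
  ext z
  simp only [B, Set.mem_setOf_eq, and_iff_left_iff_imp]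
  intro hz hd
  apply hm
  obtain ⟨w, rfl⟩ := hd
  have : (p : ℤ) ∣ (m : ℤ) := ⟨w.norm, by rw [← hπ, ← Zsqrtd.norm_mul, hz]⟩
  exact_mod_cast this


end P1

/-- χ₄ as an arithmetic function. -/
def chi : ArithmeticFunction ℤ :=
  ⟨fun d => ZMod.χ₄ (d : ZMod 4), by show ZMod.χ₄ ((0:ℕ) : ZMod 4) = 0; rw [ZMod.χ₄_nat_eq_if_mod_four]; norm_num⟩

lemma chi_apply (d : ℕ) : chi d = ZMod.χ₄ (d : ZMod 4) := rfl

lemma chi_mult : chi.IsMultiplicative := by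
  constructor
  · show ZMod.χ₄ ((1 : ℕ) : ZMod 4) = 1
    simp
  · intro m n _
    show ZMod.χ₄ (((m * n : ℕ)) : ZMod 4) = _
    push_cast
    rw [map_mul]
    rfl

def F (n : ℕ) : ℤ := ∑ d ∈ n.divisors, ZMod.χ₄ (d : ZMod 4)

lemma F_eq (n : ℕ) : F n = ((ArithmeticFunction.zeta : ArithmeticFunction ℕ) *
    chi : ArithmeticFunction ℤ) n := by
  rw [F]
  rw [ArithmeticFunction.coe_zeta_mul_apply]
  rfl

lemma F_mult : ∀ {m n : ℕ}, m.Coprime n → F (m * n) = F m * F n := by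
  intro m n h
  rw [F_eq, F_eq, F_eq]
  exact (ArithmeticFunction.isMultiplicative_zeta.natCast.mul chi_mult).map_mul_of_coprime h

lemma F_prime_pow {p : ℕ} (hp : p.Prime) (k : ℕ) :
    F (p ^ k) = ∑ i ∈ Finset.range (k + 1), (ZMod.χ₄ (p : ZMod 4)) ^ i := by
  rw [F, Nat.sum_divisors_prime_pow hp]
  refine Finset.sum_congr rfl fun i _ => ?_
  push_cast
  rw [map_pow]

lemma F_two_pow (k : ℕ) : F (2 ^ k) = 1 := by
  rw [F_prime_pow Nat.prime_two]
  have h2 : ZMod.χ₄ ((2 : ℕ) : ZMod 4) = 0 := by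
    rw [ZMod.χ₄_nat_eq_if_mod_four]; norm_num
  rw [show ((2:ℕ) : ZMod 4) = (2 : ZMod 4) by norm_cast] at h2
  rw [show ((2:ℕ) : ZMod 4) = (2 : ZMod 4) by norm_cast, h2]
  rw [Finset.sum_range_succ']
  simp

lemma F_p1_pow {p : ℕ} (hp : p.Prime) (hp1 : p % 4 = 1) (k : ℕ) :
    F (p ^ k) = (k + 1 : ℤ) := by
  rw [F_prime_pow hp, ZMod.χ₄_nat_one_mod_four hp1]
  simp

lemma F_p3_pow {p : ℕ} (hp : p.Prime) (hp3 : p % 4 = 3) (k : ℕ) :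
    F (p ^ k) = if Even k then 1 else 0 := by
  rw [F_prime_pow hp, ZMod.χ₄_nat_three_mod_four hp3, neg_one_geom_sum]
  rcases Nat.even_or_odd k with h | h
  · simp [h, Nat.even_add_one, Nat.not_even_iff_odd]
  · simp [Nat.even_add_one, Nat.not_even_iff_odd.mpr h, h]


lemma r_two_pow (k m : ℕ) : (S (2 ^ k * m)).ncard = (S m).ncard := by
  induction k with
  | zero => rw [pow_zero, one_mul]
  | succ k ih =>
    have h1 : 2 ^ (k+1) * m = 2 * (2 ^ k * m) := by ring
    have h2 : 2 ∣ 2 ^ (k+1) * m := ⟨2 ^ k * m, h1⟩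
    rw [ncard_S_two h2, h1, Nat.mul_div_cancel_left _ (by norm_num)]
    exact ih

lemma r_p3_step {p : ℕ} (hp : p.Prime) (hp3 : p % 4 = 3) (k m : ℕ) :
    (S (p ^ (k + 2) * m)).ncard = (S (p ^ k * m)).ncard := by
  have h1 : p ^ (k+2) * m = p ^ 2 * (p ^ k * m) := by ring
  rw [ncard_S_p3 hp hp3 ⟨p ^ k * m, h1⟩, h1,
    Nat.mul_div_cancel_left _ (pow_pos hp.pos 2)]

lemma r_p3_even {p : ℕ} (hp : p.Prime) (hp3 : p % 4 = 3) (j m : ℕ) :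
    (S (p ^ (2 * j) * m)).ncard = (S m).ncard := by
  induction j with
  | zero => rw [Nat.mul_zero, pow_zero, one_mul]
  | succ j ih =>
    have : 2 * (j + 1) = 2 * j + 2 := by ring
    rw [this, r_p3_step hp hp3]
    exact ih

lemma r_p3_odd {p : ℕ} (hp : p.Prime) (hp3 : p % 4 = 3) (j m : ℕ) (hm : ¬ p ∣ m) :
    (S (p ^ (2 * j + 1) * m)).ncard = 0 := by
  induction j with
  | zero =>
    rw [Nat.mul_zero, Nat.zero_add, pow_one]
    rw [S_p3_empty hp hp3 (Dvd.intro m rfl) ?_, Set.ncard_empty]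
    rintro ⟨c, hc⟩
    apply hm
    refine ⟨c, Nat.eq_of_mul_eq_mul_left hp.pos ?_⟩
    rw [hc]; ring
  | succ j ih =>
    have : 2 * (j + 1) + 1 = (2 * j + 1) + 2 := by ring
    rw [this, r_p3_step hp hp3]
    exact ih

lemma r_p1 {p : ℕ} {π : GaussianInt} (hp : p.Prime) (hπ : π.norm = (p : ℤ))
    (hstar : ¬ π ∣ star π) {m : ℕ} (hm : ¬ p ∣ m) (k : ℕ) :
    (S (p ^ k * m)).ncard = (k + 1) * (S m).ncard ∧ (B π (p ^ k * m)).ncard = (S m).ncard := by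
  induction k with
  | zero =>
    rw [pow_zero, one_mul, B_eq_S hπ hm]
    exact ⟨(one_mul _).symm, rfl⟩
  | succ k ih =>
    have h1 : p ^ (k+1) * m = p * (p ^ k * m) := by ring
    have h2 : p ∣ p ^ (k+1) * m := ⟨p ^ k * m, h1⟩
    have h3 : p ^ (k+1) * m / p = p ^ k * m := by
      rw [h1, Nat.mul_div_cancel_left _ hp.pos]
    constructor
    · rw [ncard_S_p1_split hp hπ hstar h2, h3, ih.1, ih.2]; ring
    · rw [ncard_B_descend hp hπ hstar h2, h3, ih.2]


theorem main : ∀ n : ℕ, 0 < n → ((S n).ncard : ℤ) = 4 * F n := by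
  intro n
  induction n using Nat.strong_induction_on with
  | _ n ih =>
    intro hn
    rcases eq_or_lt_of_le (show 1 ≤ n from hn) with h1 | h1
    · rw [← h1, ncard_S_one]
      have : F 1 = 1 := by
        rw [F, Nat.divisors_one, Finset.sum_singleton]
        simp
      rw [this]; ring
    · -- n ≥ 2
      set p := n.minFac with hpdef
      have hp : p.Prime := Nat.minFac_prime (by omega)
      set k := n.factorization p with hkdef
      set m := n / p ^ k with hmdef
      have hnm : p ^ k * m = n := Nat.ordProj_mul_ordCompl_eq_self n p
      have hm : ¬ p ∣ m := Nat.not_dvd_ordCompl hp (by omega)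
      have hm0 : 0 < m := Nat.ordCompl_pos p (by omega)
      have hk : 1 ≤ k := (Nat.Prime.factorization_pos_of_dvd hp (by omega) (Nat.minFac_dvd n))
      have hmn : m < n := by
        calc m = 1 * m := (one_mul m).symm
        _ < p ^ k * m := by
          apply Nat.mul_lt_mul_of_lt_of_le ?_ (le_refl m) hm0
          calc 1 < p := hp.one_lt
          _ ≤ p ^ k := Nat.le_self_pow (by omega) p
        _ = n := hnm
      have hcop : (p ^ k).Coprime m :=
        Nat.Coprime.pow_left _ ((Nat.Prime.coprime_iff_not_dvd hp).mpr hm)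
      have hihm := ih m hmn hm0
      have hF : F (p ^ k * m) = F (p ^ k) * F m := F_mult hcop
      rw [← hnm, hF]
      rcases hp.eq_two_or_odd with hp2 | hpodd
      · -- p = 2
        rw [hp2] at *
        rw [r_two_pow k m, F_two_pow, hihm]; ring
      · have hp14 : p % 4 = 1 ∨ p % 4 = 3 := by omega
        rcases hp14 with hp1 | hp3
        · -- p ≡ 1 mod 4
          haveI : Fact p.Prime := ⟨hp⟩
          obtain ⟨a, b, hab⟩ := Nat.Prime.sq_add_sq (p := p) (by omega)
          have hπ : ((⟨(a:ℤ), (b:ℤ)⟩ : GaussianInt)).norm = (p : ℤ) := by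
            rw [Zsqrtd.norm_def]
            push_cast
            nlinarith [hab]
          have hr := (r_p1 hp hπ (not_dvd_star hp hp1 hπ) hm k).1
          rw [hr, F_p1_pow hp hp1]
          push_cast
          rw [hihm]
          ring
        · rcases Nat.even_or_odd k with ⟨j, hj⟩ | ⟨j, hj⟩
          · rw [hj, show j + j = 2 * j by ring] at *
            rw [r_p3_even hp hp3 j m, F_p3_pow hp hp3, if_pos (by exact ⟨j, by ring⟩), hihm]
            ring
          · rw [hj] at *
            rw [r_p3_odd hp hp3 j m hm, F_p3_pow hp hp3,
              if_neg (by simp [Nat.even_add_one, parity_simps])]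
            simp

end TwoSq


/-- `r(n) = 4 ∑_{d ∣ n} χ₄(d)` where `r(n)` counts representations of `n` as a
sum of two integer squares. -/
theorem stmt_2 (n : ℕ) (hn : 0 < n) :
    (Set.ncard {p : ℤ × ℤ | p.1 ^ 2 + p.2 ^ 2 = (n : ℤ)} : ℤ)
      = 4 * ∑ d ∈ n.divisors, ZMod.χ₄ (d : ZMod 4) := by
  have key := TwoSq.main n hn
  have himg : TwoSq.S n
      = (fun q : ℤ × ℤ => (⟨q.1, q.2⟩ : GaussianInt)) '' {p : ℤ × ℤ | p.1 ^ 2 + p.2 ^ 2 = (n : ℤ)} := by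
    ext z
    constructor
    · intro hz
      refine ⟨(z.re, z.im), ?_, by ext <;> rfl⟩
      have : z.re * z.re + z.im * z.im = (n : ℤ) := by simpa [TwoSq.S, Zsqrtd.norm_def] using hz
      simp only [Set.mem_setOf_eq]
      nlinarith [this]
    · rintro ⟨q, hq, rfl⟩
      show Zsqrtd.norm ⟨q.1, q.2⟩ = (n : ℤ)
      simp only [Set.mem_setOf_eq] at hq
      rw [Zsqrtd.norm_def]
      nlinarith [hq]
  have hinj : Function.Injective (fun q : ℤ × ℤ => (⟨q.1, q.2⟩ : GaussianInt)) := by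
    intro x y hxy
    rw [Zsqrtd.ext_iff] at hxy
    exact Prod.ext hxy.1 hxy.2
  have hcard : {p : ℤ × ℤ | p.1 ^ 2 + p.2 ^ 2 = (n : ℤ)}.ncard = (TwoSq.S n).ncard := by
    rw [himg, Set.ncard_image_of_injective _ hinj]
  rw [hcard, key]
  rfl
end

section
/- Let f be a non-negative multiplicative arithmetic function such that ∑_{p ≤ y} f(p) log p ≤ A·y for all y ≥ 0 and ∑_p ∑_{ν≥2} f(p^ν) log(p^ν)/p^ν ≤ B, for constants A, B > 0. Then for x > 1, ∑_{n ≤ x} f(n) ≤ (A+B+1)·(x/log x)·∑_{n ≤ x} f(n)/n. -/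
open Finset

private lemma rh_log_decomp {N n : ℕ} (hn : n ∈ Finset.Icc 1 N) :
    Real.log n = ∑ p ∈ (Finset.range (N + 1)).filter Nat.Prime,
      (n.factorization p : ℝ) * Real.log p := by
  obtain ⟨hn1, hnN⟩ := Finset.mem_Icc.mp hn
  have hn0 : n ≠ 0 := by omega
  have key : Real.log n = ∑ p ∈ n.primeFactors, (n.factorization p : ℝ) * Real.log p := by
    conv_lhs => rw [← Nat.factorization_prod_pow_eq_self hn0]
    rw [Nat.prod_factorization_eq_prod_primeFactors]
    push_cast
    rw [Real.log_prod]
    · refine Finset.sum_congr rfl fun p hp => ?_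
      rw [Real.log_pow]
    · intro p hp
      have hp2 := Nat.prime_of_mem_primeFactors hp
      exact pow_ne_zero _ (Nat.cast_ne_zero.mpr hp2.pos.ne')
  rw [key]
  refine Finset.sum_subset ?_ ?_
  · intro p hp
    have hp2 := Nat.prime_of_mem_primeFactors hp
    have hdvd := Nat.dvd_of_mem_primeFactors hp
    have : p ≤ n := Nat.le_of_dvd (by omega) hdvd
    simp only [Finset.mem_filter, Finset.mem_range]
    exact ⟨by omega, hp2⟩
  · intro p _ hp
    have : n.factorization p = 0 := by
      by_contra h
      exact hp (Nat.support_factorization n ▸ Finsupp.mem_support_iff.mpr h)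
    simp [this]

private lemma rh_fiber (f : ℕ → ℝ)
    (hmul : ∀ m n : ℕ, Nat.Coprime m n → f (m * n) = f m * f n)
    (N p ν : ℕ) (hp : p.Prime) (hν : 1 ≤ ν) :
    ∑ n ∈ (Finset.Icc 1 N).filter (fun n => n.factorization p = ν), f n
      = f (p ^ ν) * ∑ m ∈ (Finset.Icc 1 N).filter (fun m => ¬ p ∣ m ∧ p ^ ν * m ≤ N), f m := by
  have hpp : 0 < p ^ ν := pow_pos hp.pos ν
  rw [Finset.mul_sum]
  refine Finset.sum_nbij' (fun n => n / p ^ ν) (fun m => p ^ ν * m) ?_ ?_ ?_ ?_ ?_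
  · intro n hn
    simp only [Finset.mem_filter, Finset.mem_Icc] at hn ⊢
    obtain ⟨⟨hn1, hnN⟩, hfac⟩ := hn
    have hn0 : n ≠ 0 := by omega
    have hdvd : p ^ ν ∣ n := hfac ▸ Nat.ordProj_dvd n p
    have hpos : 0 < n / p ^ ν := Nat.div_pos (Nat.le_of_dvd (by omega) hdvd) hpp
    refine ⟨⟨hpos, le_trans (Nat.div_le_self _ _) hnN⟩, ?_, ?_⟩
    · rw [← hfac]; exact Nat.not_dvd_ordCompl hp hn0
    · rw [Nat.mul_div_cancel' hdvd]; exact hnN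
  · intro m hm
    simp only [Finset.mem_filter, Finset.mem_Icc] at hm ⊢
    obtain ⟨⟨hm1, hmN⟩, hpm, hle⟩ := hm
    refine ⟨⟨by exact Nat.one_le_iff_ne_zero.mpr (Nat.mul_ne_zero hpp.ne' (by omega)), hle⟩, ?_⟩
    rw [Nat.factorization_mul hpp.ne' (by omega), Nat.Prime.factorization_pow hp]
    simp [Nat.factorization_eq_zero_of_not_dvd hpm]
  · intro n hn
    simp only [Finset.mem_filter, Finset.mem_Icc] at hn
    obtain ⟨⟨hn1, hnN⟩, hfac⟩ := hn
    exact Nat.mul_div_cancel' (hfac ▸ Nat.ordProj_dvd n p)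
  · intro m hm
    exact Nat.mul_div_cancel_left _ hpp
  · intro n hn
    simp only [Finset.mem_filter, Finset.mem_Icc] at hn
    obtain ⟨⟨hn1, hnN⟩, hfac⟩ := hn
    have hn0 : n ≠ 0 := by omega
    have hdvd : p ^ ν ∣ n := hfac ▸ Nat.ordProj_dvd n p
    have hcop : Nat.Coprime (p ^ ν) (n / p ^ ν) := by
      apply Nat.Coprime.pow_left
      rw [← hfac]
      exact Nat.coprime_ordCompl hp hn0
    rw [← hmul _ _ hcop, Nat.mul_div_cancel' hdvd]

set_option maxHeartbeats 1000000 in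
/-- The Richert–Halberstam inequality: if `f` is a non-negative multiplicative
function with `∑_{p ≤ y} f(p) log p ≤ A y` and
`∑_p ∑_{ν ≥ 2} f(p^ν) log(p^ν) / p^ν ≤ B`, then for `x > 1`,
`∑_{n ≤ x} f(n) ≤ (A+B+1) (x / log x) ∑_{n ≤ x} f(n)/n`. -/
theorem stmt_6 (f : ℕ → ℝ) (hf1 : f 1 = 1)
    (hmul : ∀ m n : ℕ, Nat.Coprime m n → f (m * n) = f m * f n)
    (hnonneg : ∀ n, 0 ≤ f n) (A B : ℝ) (hA : 0 < A) (hB : 0 < B)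
    (h1 : ∀ y : ℝ, 0 ≤ y →
      ∑ p ∈ (Finset.range (⌊y⌋₊ + 1)).filter Nat.Prime, f p * Real.log p ≤ A * y)
    (h2 : ∀ P K : ℕ,
      ∑ p ∈ (Finset.range P).filter Nat.Prime,
        ∑ ν ∈ Finset.Icc 2 K, f (p ^ ν) * Real.log ((p : ℝ) ^ ν) / (p : ℝ) ^ ν ≤ B)
    (x : ℝ) (hx : 1 < x) :
    ∑ n ∈ Finset.Icc 1 ⌊x⌋₊, f n ≤
      (A + B + 1) * (x / Real.log x) * ∑ n ∈ Finset.Icc 1 ⌊x⌋₊, f n / n := by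
  set N := ⌊x⌋₊ with hN
  have hx0 : 0 < x := by linarith
  have hN1 : 1 ≤ N := Nat.le_floor (by exact_mod_cast hx.le)
  have hNx : (N : ℝ) ≤ x := Nat.floor_le (le_of_lt hx0)
  have hlogx : 0 < Real.log x := Real.log_pos hx
  set S := ∑ n ∈ Finset.Icc 1 N, f n with hS
  set T := ∑ n ∈ Finset.Icc 1 N, f n / n with hT
  have hT0 : 0 ≤ T := Finset.sum_nonneg fun n hn => by
    have := hnonneg n; positivity
  set P := (Finset.range (N + 1)).filter Nat.Prime with hP
  set M : ℕ → ℕ → ℝ :=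
    fun p ν => ∑ m ∈ (Finset.Icc 1 N).filter (fun m => ¬ p ∣ m ∧ p ^ ν * m ≤ N), f m with hM
  have hM0 : ∀ p ν, 0 ≤ M p ν := fun p ν =>
    Finset.sum_nonneg fun m _ => hnonneg m
  -- key bound on M: M p ν ≤ (x / p^ν) * T
  have hMbound : ∀ p ν : ℕ, 0 < p → M p ν ≤ (x / (p : ℝ) ^ ν) * T := by
    intro p ν hppos
    have hpν : (0 : ℝ) < (p : ℝ) ^ ν := by positivity
    calc M p ν ≤ ∑ m ∈ (Finset.Icc 1 N).filter (fun m => ¬ p ∣ m ∧ p ^ ν * m ≤ N),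
          (x / (p : ℝ) ^ ν) * (f m / m) := by
          refine Finset.sum_le_sum fun m hm => ?_
          simp only [Finset.mem_filter, Finset.mem_Icc] at hm
          obtain ⟨⟨hm1, hmN⟩, _, hle⟩ := hm
          have hmpos : (0 : ℝ) < m := by exact_mod_cast hm1
          have hle' : ((p : ℝ) ^ ν) * m ≤ x := by
            calc ((p : ℝ) ^ ν) * m = ((p ^ ν * m : ℕ) : ℝ) := by push_cast; ring
              _ ≤ (N : ℝ) := by exact_mod_cast hle
              _ ≤ x := hNx
          have hmx : (m : ℝ) ≤ x / (p : ℝ) ^ ν := by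
            rw [le_div_iff₀ hpν]; linarith [hle']
          calc f m = (f m / m) * m := by field_simp
            _ ≤ (f m / m) * (x / (p : ℝ) ^ ν) := by
                refine mul_le_mul_of_nonneg_left hmx ?_
                have := hnonneg m; positivity
            _ = (x / (p : ℝ) ^ ν) * (f m / m) := by ring
      _ ≤ ∑ m ∈ Finset.Icc 1 N, (x / (p : ℝ) ^ ν) * (f m / m) := by
          refine Finset.sum_le_sum_of_subset_of_nonneg (Finset.filter_subset _ _) ?_
          intro m hm _
          have hm1 := (Finset.mem_Icc.mp hm).1
          have hmpos : (0 : ℝ) < m := by exact_mod_cast hm1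
          have := hnonneg m
          positivity
      _ = (x / (p : ℝ) ^ ν) * T := by rw [hT, Finset.mul_sum]
  -- Step B
  have stepB : ∑ n ∈ Finset.Icc 1 N, f n * (Real.log x - Real.log n) ≤ x * T := by
    rw [hT, Finset.mul_sum]
    refine Finset.sum_le_sum fun n hn => ?_
    obtain ⟨hn1, hnN⟩ := Finset.mem_Icc.mp hn
    have hnpos : (0 : ℝ) < n := by exact_mod_cast hn1
    have hlog : Real.log x - Real.log n ≤ x / n := by
      rw [← Real.log_div (by positivity) (by positivity)]
      have := Real.log_le_sub_one_of_pos (show (0:ℝ) < x / n by positivity)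
      linarith
    calc f n * (Real.log x - Real.log n) ≤ f n * (x / n) :=
          mul_le_mul_of_nonneg_left hlog (hnonneg n)
      _ = x * (f n / n) := by ring
  -- Step C : ∑ f n log n ≤ (A + B) * (x * T)
  have stepC : ∑ n ∈ Finset.Icc 1 N, f n * Real.log n ≤ (A + B) * (x * T) := by
    have e1 : ∑ n ∈ Finset.Icc 1 N, f n * Real.log n
        = ∑ p ∈ P, ∑ ν ∈ Finset.Icc 1 N, ((ν : ℝ) * Real.log p) * (f (p ^ ν) * M p ν) := by
      calc ∑ n ∈ Finset.Icc 1 N, f n * Real.log n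
          = ∑ n ∈ Finset.Icc 1 N, ∑ p ∈ P, f n * ((n.factorization p : ℝ) * Real.log p) := by
            refine Finset.sum_congr rfl fun n hn => ?_
            rw [rh_log_decomp hn, Finset.mul_sum]
        _ = ∑ p ∈ P, ∑ n ∈ Finset.Icc 1 N, f n * ((n.factorization p : ℝ) * Real.log p) :=
            Finset.sum_comm
        _ = ∑ p ∈ P, ∑ ν ∈ Finset.Icc 1 N, ((ν : ℝ) * Real.log p) * (f (p ^ ν) * M p ν) := by
            refine Finset.sum_congr rfl fun p hp => ?_
            have hpprime : p.Prime := (Finset.mem_filter.mp hp).2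
            have hmaps : ∀ n ∈ Finset.Icc 1 N, n.factorization p ∈ Finset.range (N + 1) := by
              intro n hn
              obtain ⟨hn1, hnN⟩ := Finset.mem_Icc.mp hn
              have := Nat.factorization_lt (n := n) p (by omega)
              simp only [Finset.mem_range]; omega
            rw [← Finset.sum_fiberwise_of_maps_to hmaps
              (fun n => f n * ((n.factorization p : ℝ) * Real.log p))]
            have e2 : ∑ ν ∈ Finset.range (N + 1),
                ∑ n ∈ (Finset.Icc 1 N).filter (fun n => n.factorization p = ν),
                  f n * ((n.factorization p : ℝ) * Real.log p)
                = ∑ ν ∈ Finset.Icc 1 N,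
                ∑ n ∈ (Finset.Icc 1 N).filter (fun n => n.factorization p = ν),
                  f n * ((n.factorization p : ℝ) * Real.log p) := by
              refine (Finset.sum_subset ?_ ?_).symm
              · intro ν hν
                simp only [Finset.mem_Icc] at hν
                simp only [Finset.mem_range]; omega
              · intro ν hν hν'
                simp only [Finset.mem_range] at hν
                simp only [Finset.mem_Icc] at hν'
                have hν0 : ν = 0 := by omega
                subst hν0
                refine Finset.sum_eq_zero fun n hn => ?_
                have := (Finset.mem_filter.mp hn).2
                rw [this]; simp
            rw [e2]
            refine Finset.sum_congr rfl fun ν hν => ?_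
            have hν1 : 1 ≤ ν := (Finset.mem_Icc.mp hν).1
            have : ∑ n ∈ (Finset.Icc 1 N).filter (fun n => n.factorization p = ν),
                f n * ((n.factorization p : ℝ) * Real.log p)
                = ((ν : ℝ) * Real.log p) *
                  ∑ n ∈ (Finset.Icc 1 N).filter (fun n => n.factorization p = ν), f n := by
              rw [Finset.mul_sum]
              refine Finset.sum_congr rfl fun n hn => ?_
              have := (Finset.mem_filter.mp hn).2
              rw [this]; ring
            rw [this, rh_fiber f hmul N p ν hpprime hν1]
    -- split the ν-sum into ν = 1 and ν ≥ 2
    have esplit : ∀ p ∈ P,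
        ∑ ν ∈ Finset.Icc 1 N, ((ν : ℝ) * Real.log p) * (f (p ^ ν) * M p ν)
        = Real.log p * (f p * M p 1)
          + ∑ ν ∈ Finset.Icc 2 N, ((ν : ℝ) * Real.log p) * (f (p ^ ν) * M p ν) := by
      intro p hp
      have h1N : (1 : ℕ) ∈ Finset.Icc 1 N := Finset.mem_Icc.mpr ⟨le_refl 1, hN1⟩
      rw [← Finset.add_sum_erase _ _ h1N]
      have : (Finset.Icc 1 N).erase 1 = Finset.Icc 2 N := by
        ext ν
        simp only [Finset.mem_erase, Finset.mem_Icc]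
        omega
      rw [this]
      norm_num
    -- Part 1 : ν = 1 terms
    have part1 : ∑ p ∈ P, Real.log p * (f p * M p 1) ≤ A * (x * T) := by
      have step1 : ∀ p ∈ P, Real.log p * (f p * M p 1)
          ≤ ∑ m ∈ Finset.Icc 1 N, (if p * m ≤ N then f p * Real.log p * f m else 0) := by
        intro p hp
        have hpprime : p.Prime := (Finset.mem_filter.mp hp).2
        have hlogp : 0 ≤ Real.log p := Real.log_natCast_nonneg p
        have : Real.log p * (f p * M p 1)
            = ∑ m ∈ (Finset.Icc 1 N).filter (fun m => ¬ p ∣ m ∧ p ^ 1 * m ≤ N),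
                f p * Real.log p * f m := by
          rw [hM]
          simp only
          rw [Finset.mul_sum, Finset.mul_sum]
          exact Finset.sum_congr rfl fun m _ => by ring
        rw [this, ← Finset.sum_filter]
        refine Finset.sum_le_sum_of_subset_of_nonneg ?_ ?_
        · intro m hm
          simp only [Finset.mem_filter, pow_one] at hm ⊢
          exact ⟨hm.1, hm.2.2⟩
        · intro m _ _
          have := hnonneg p; have := hnonneg m
          positivity
      calc ∑ p ∈ P, Real.log p * (f p * M p 1)
          ≤ ∑ p ∈ P, ∑ m ∈ Finset.Icc 1 N,
              (if p * m ≤ N then f p * Real.log p * f m else 0) :=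
            Finset.sum_le_sum step1
        _ = ∑ m ∈ Finset.Icc 1 N, ∑ p ∈ P,
              (if p * m ≤ N then f p * Real.log p * f m else 0) := Finset.sum_comm
        _ ≤ ∑ m ∈ Finset.Icc 1 N, f m * (A * (x / m)) := by
            refine Finset.sum_le_sum fun m hm => ?_
            obtain ⟨hm1, hmN⟩ := Finset.mem_Icc.mp hm
            have hmpos : (0 : ℝ) < m := by exact_mod_cast hm1
            have hxm : 0 ≤ x / m := by positivity
            rw [← Finset.sum_filter]
            have hsub : (P.filter (fun p => p * m ≤ N))
                ⊆ (Finset.range (⌊x / (m : ℝ)⌋₊ + 1)).filter Nat.Prime := by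
              intro p hp'
              simp only [hP, Finset.mem_filter, Finset.mem_range] at hp' ⊢
              obtain ⟨⟨_, hpprime⟩, hple⟩ := hp'
              refine ⟨?_, hpprime⟩
              have hpx : (p : ℝ) ≤ x / m := by
                rw [le_div_iff₀ hmpos]
                calc (p : ℝ) * m = ((p * m : ℕ) : ℝ) := by push_cast; ring
                  _ ≤ (N : ℝ) := by exact_mod_cast hple
                  _ ≤ x := hNx
              have := Nat.le_floor hpx
              omega
            calc ∑ p ∈ P.filter (fun p => p * m ≤ N), f p * Real.log p * f m
                = (∑ p ∈ P.filter (fun p => p * m ≤ N), f p * Real.log p) * f m := by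
                  rw [Finset.sum_mul]
              _ ≤ (∑ p ∈ (Finset.range (⌊x / (m : ℝ)⌋₊ + 1)).filter Nat.Prime,
                    f p * Real.log p) * f m := by
                  refine mul_le_mul_of_nonneg_right ?_ (hnonneg m)
                  refine Finset.sum_le_sum_of_subset_of_nonneg hsub fun p hp' _ => ?_
                  have := hnonneg p
                  have : (0:ℝ) ≤ Real.log p := Real.log_natCast_nonneg p
                  have := hnonneg p
                  positivity
              _ ≤ (A * (x / m)) * f m :=
                  mul_le_mul_of_nonneg_right (h1 (x / m) hxm) (hnonneg m)
              _ = f m * (A * (x / m)) := by ring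
        _ = A * (x * T) := by
            rw [hT, Finset.mul_sum, Finset.mul_sum]
            refine Finset.sum_congr rfl fun m hm => ?_
            obtain ⟨hm1, _⟩ := Finset.mem_Icc.mp hm
            have hmpos : (0 : ℝ) < m := by exact_mod_cast hm1
            field_simp
    -- Part 2 : ν ≥ 2 terms
    have part2 : ∑ p ∈ P, ∑ ν ∈ Finset.Icc 2 N, ((ν : ℝ) * Real.log p) * (f (p ^ ν) * M p ν)
        ≤ B * (x * T) := by
      have step2 : ∀ p ∈ P, ∀ ν ∈ Finset.Icc 2 N,
          ((ν : ℝ) * Real.log p) * (f (p ^ ν) * M p ν)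
          ≤ (x * T) * (f (p ^ ν) * Real.log ((p : ℝ) ^ ν) / (p : ℝ) ^ ν) := by
        intro p hp ν hν
        have hpprime : p.Prime := (Finset.mem_filter.mp hp).2
        have hlogp : 0 ≤ Real.log p := Real.log_natCast_nonneg p
        have hpν : (0 : ℝ) < (p : ℝ) ^ ν := by
          have : (0:ℝ) < (p:ℝ) := by exact_mod_cast hpprime.pos
          positivity
        have hMb := hMbound p ν hpprime.pos
        calc ((ν : ℝ) * Real.log p) * (f (p ^ ν) * M p ν)
            ≤ ((ν : ℝ) * Real.log p) * (f (p ^ ν) * ((x / (p : ℝ) ^ ν) * T)) := by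
              refine mul_le_mul_of_nonneg_left ?_ ?_
              · exact mul_le_mul_of_nonneg_left hMb (hnonneg _)
              · positivity
          _ = (x * T) * (f (p ^ ν) * ((ν : ℝ) * Real.log p) / (p : ℝ) ^ ν) := by
              field_simp
          _ = (x * T) * (f (p ^ ν) * Real.log ((p : ℝ) ^ ν) / (p : ℝ) ^ ν) := by
              rw [Real.log_pow]
      have hxT : 0 ≤ x * T := by positivity
      calc ∑ p ∈ P, ∑ ν ∈ Finset.Icc 2 N, ((ν : ℝ) * Real.log p) * (f (p ^ ν) * M p ν)
          ≤ ∑ p ∈ P, ∑ ν ∈ Finset.Icc 2 N,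
              (x * T) * (f (p ^ ν) * Real.log ((p : ℝ) ^ ν) / (p : ℝ) ^ ν) :=
            Finset.sum_le_sum fun p hp => Finset.sum_le_sum (step2 p hp)
        _ = (x * T) * ∑ p ∈ P, ∑ ν ∈ Finset.Icc 2 N,
              (f (p ^ ν) * Real.log ((p : ℝ) ^ ν) / (p : ℝ) ^ ν) := by
            simp only [← Finset.mul_sum]
        _ ≤ (x * T) * B := mul_le_mul_of_nonneg_left (h2 (N + 1) N) hxT
        _ = B * (x * T) := by ring
    rw [e1, Finset.sum_congr rfl esplit, Finset.sum_add_distrib]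
    linarith [part1, part2]
  -- combine
  -- combine
  have hsplit : Real.log x * S
      = (∑ n ∈ Finset.Icc 1 N, f n * Real.log n)
        + ∑ n ∈ Finset.Icc 1 N, f n * (Real.log x - Real.log n) := by
    rw [hS, Finset.mul_sum, ← Finset.sum_add_distrib]
    refine Finset.sum_congr rfl fun n hn => ?_
    ring
  rw [show (A + B + 1) * (x / Real.log x) * T = ((A + B) * (x * T) + x * T) / Real.log x by
    field_simp, le_div_iff₀ hlogx]
  nlinarith [stepB, stepC, hsplit]
end

section
/- Let f be a non-negative multiplicative function satisfying ∑_p ∑_{ν≥2} f(p^ν) log(p^ν)/p^ν ≤ B for some B > 0. Then for x > 1, ∑_{n ≤ x} f(n)/n ≤ exp(B + ∑_{p ≤ x} f(p)/p). -/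
/-!
Every `n ≤ x` appears as a term of the truncated Euler product
`∏_{p ≤ x} ∑_{ν ≤ x} f(p^ν)/p^ν`, so by non-negativity the sum is at most that product.
By `1 + t ≤ eᵗ` each factor is at most `exp (f(p)/p + ∑_{ν ≥ 2} f(p^ν)/p^ν)`, and since
`log (p^ν) ≥ log 4 > 1` for `ν ≥ 2`, the prime powers with `ν ≥ 2` contribute at most `B`.
-/

open Finset

theorem prod_pow_factorization_of_primeFactors_subset {M : Type*} [CommMonoid M] {g : ℕ → M}
    (hmul : ∀ m n, m.Coprime n → g (m * n) = g m * g n) (hg1 : g 1 = 1)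
    {n : ℕ} (hn : n ≠ 0) {s : Finset ℕ} (hs : n.primeFactors ⊆ s) :
    ∏ p ∈ s, g (p ^ n.factorization p) = g n := by
  have hsupp : n.factorization.support ⊆ s := by rwa [Nat.support_factorization]
  rw [Nat.multiplicative_factorization g hmul hg1 hn,
    Finsupp.prod_of_support_subset _ hsupp _ fun _ _ => by simp [hg1]]

theorem Nat.eq_of_factorization_eq_on_primesBelow {N a b : ℕ} (ha : a ∈ Icc 1 N)
    (hb : b ∈ Icc 1 N) (h : ∀ p ∈ (N + 1).primesBelow, a.factorization p = b.factorization p) :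
    a = b := by
  rw [mem_Icc] at ha hb
  refine Nat.eq_of_factorization_eq (by omega) (by omega) fun p => ?_
  by_cases hp : p ∈ (N + 1).primesBelow
  · exact h p hp
  rw [Nat.mem_primesBelow, not_and_or, not_lt] at hp
  rcases hp with hNp | hp
  · rw [Nat.factorization_eq_zero_of_lt (by omega), Nat.factorization_eq_zero_of_lt (by omega)]
  · rw [Nat.factorization_eq_zero_of_not_prime _ hp, Nat.factorization_eq_zero_of_not_prime _ hp]

section EulerProduct

variable {R : Type*} [CommSemiring R] [PartialOrder R] [IsOrderedRing R] {g : ℕ → R}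

theorem sum_Icc_le_prod_primesBelow_sum_pow
    (hmul : ∀ m n, m.Coprime n → g (m * n) = g m * g n) (hg1 : g 1 = 1) (hg0 : ∀ n, 0 ≤ g n)
    (N : ℕ) :
    ∑ n ∈ Icc 1 N, g n ≤ ∏ p ∈ (N + 1).primesBelow, ∑ ν ∈ range (N + 1), g (p ^ ν) := by
  classical
  set s := (N + 1).primesBelow
  let v : ℕ → ∀ p ∈ s, ℕ := fun n p _ => n.factorization p
  have hv_inj : Set.InjOn v (Icc 1 N) := fun a ha b hb hab =>
    Nat.eq_of_factorization_eq_on_primesBelow ha hb fun p hp => congr_fun₂ hab p hp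
  have hv_mem : ∀ n ∈ Icc 1 N, v n ∈ s.pi fun _ => range (N + 1) := by
    intro n hn
    rw [mem_Icc] at hn
    simp only [mem_pi, mem_range, v]
    intro p _
    have := Nat.factorization_lt p (n := n) (by omega)
    omega
  have hv_val : ∀ n ∈ Icc 1 N, ∏ p ∈ s.attach, g (p.1 ^ v n p.1 p.2) = g n := by
    intro n hn
    rw [mem_Icc] at hn
    refine (prod_attach s fun p => g (p ^ n.factorization p)).trans
      (prod_pow_factorization_of_primeFactors_subset hmul hg1 (by omega) fun p hp => ?_)
    exact Nat.mem_primesBelow.2 ⟨by have := Nat.le_of_mem_primeFactors hp; omega,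
      Nat.prime_of_mem_primeFactors hp⟩
  rw [prod_sum]
  calc ∑ n ∈ Icc 1 N, g n = ∑ e ∈ (Icc 1 N).image v, ∏ p ∈ s.attach, g (p.1 ^ e p.1 p.2) := by
        rw [sum_image hv_inj]
        exact (sum_congr rfl hv_val).symm
    _ ≤ _ := sum_le_sum_of_subset_of_nonneg (image_subset_iff.2 hv_mem)
        fun _ _ _ => prod_nonneg fun _ _ => hg0 _

theorem sum_range_succ_le_add_add_sum_Icc {a : ℕ → R} (ha : ∀ n, 0 ≤ a n) (K : ℕ) :
    ∑ ν ∈ range (K + 1), a ν ≤ a 0 + a 1 + ∑ ν ∈ Icc 2 K, a ν := by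
  rcases K with _ | K
  · simpa using le_add_of_nonneg_right (ha 1)
  · rw [sum_range_succ', sum_range_succ', ← Ico_add_one_right_eq_Icc, sum_Ico_eq_sum_range,
      show K + 1 + 1 - 2 = K by omega]
    apply le_of_eq
    ring_nf

end EulerProduct

theorem one_le_log_natCast_pow {p ν : ℕ} (hp : 2 ≤ p) (hν : 2 ≤ ν) :
    1 ≤ Real.log ((p : ℝ) ^ ν) := by
  rw [Real.le_log_iff_exp_le (by positivity)]
  have hp' : (2 : ℝ) ≤ p := by exact_mod_cast hp
  calc Real.exp 1 ≤ 2 ^ 2 := by linarith [Real.exp_one_lt_d9]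
    _ ≤ (p : ℝ) ^ 2 := by gcongr
    _ ≤ (p : ℝ) ^ ν := pow_le_pow_right₀ (by linarith) hν

theorem stmt_7_general (f : ℕ → ℝ) (hf1 : f 1 = 1)
    (hmul : ∀ m n : ℕ, Nat.Coprime m n → f (m * n) = f m * f n)
    (hnonneg : ∀ n, 0 ≤ f n) (B : ℝ)
    (h2 : ∀ P K : ℕ,
      ∑ p ∈ (Finset.range P).filter Nat.Prime,
        ∑ ν ∈ Finset.Icc 2 K, f (p ^ ν) * Real.log ((p : ℝ) ^ ν) / (p : ℝ) ^ ν ≤ B)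
    (x : ℝ) :
    ∑ n ∈ Finset.Icc 1 ⌊x⌋₊, f n / n ≤
      Real.exp (B + ∑ p ∈ (Finset.range (⌊x⌋₊ + 1)).filter Nat.Prime, f p / p) := by
  set N := ⌊x⌋₊
  set g : ℕ → ℝ := fun n => f n / n
  have hg1 : g 1 = 1 := by simp [g, hf1]
  have hg0 : ∀ n, 0 ≤ g n := fun n => div_nonneg (hnonneg n) n.cast_nonneg
  have hg_mul : ∀ m n, m.Coprime n → g (m * n) = g m * g n := fun m n h => by
    simp only [g, hmul m n h, Nat.cast_mul, mul_div_mul_comm]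
  have hlocal : ∀ p ∈ (N + 1).primesBelow, ∑ ν ∈ range (N + 1), g (p ^ ν) ≤
      Real.exp (f p / p + ∑ ν ∈ Icc 2 N, f (p ^ ν) * Real.log ((p : ℝ) ^ ν) / (p : ℝ) ^ ν) := by
    intro p hp
    have hp2 := (Nat.prime_of_mem_primesBelow hp).two_le
    calc ∑ ν ∈ range (N + 1), g (p ^ ν) ≤ g (p ^ 0) + g (p ^ 1) + ∑ ν ∈ Icc 2 N, g (p ^ ν) :=
          sum_range_succ_le_add_add_sum_Icc (fun _ => hg0 _) N
      _ ≤ (f p / p + ∑ ν ∈ Icc 2 N, f (p ^ ν) * Real.log ((p : ℝ) ^ ν) / (p : ℝ) ^ ν) + 1 := by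
          simp only [pow_zero, hg1, pow_one, g, Nat.cast_pow]
          rw [add_assoc, add_comm]
          gcongr with ν hν
          exact le_mul_of_one_le_right (hnonneg _) (one_le_log_natCast_pow hp2 (mem_Icc.1 hν).1)
      _ ≤ _ := Real.add_one_le_exp _
  calc ∑ n ∈ Icc 1 N, f n / n ≤ ∏ p ∈ (N + 1).primesBelow, ∑ ν ∈ range (N + 1), g (p ^ ν) :=
        sum_Icc_le_prod_primesBelow_sum_pow hg_mul hg1 hg0 N
    _ ≤ ∏ p ∈ (N + 1).primesBelow,
          Real.exp (f p / p + ∑ ν ∈ Icc 2 N, f (p ^ ν) * Real.log ((p : ℝ) ^ ν) / (p : ℝ) ^ ν) :=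
        prod_le_prod (fun _ _ => sum_nonneg fun _ _ => hg0 _) hlocal
    _ ≤ Real.exp (B + ∑ p ∈ (N + 1).primesBelow, f p / p) := by
        rw [← Real.exp_sum, sum_add_distrib, add_comm]
        gcongr
        exact h2 (N + 1) N

/-- If `f` is a non-negative multiplicative function with
`∑_p ∑_{ν ≥ 2} f(p^ν) log(p^ν) / p^ν ≤ B`, then for `x > 1`,
`∑_{n ≤ x} f(n)/n ≤ exp(B + ∑_{p ≤ x} f(p)/p)`. -/
theorem stmt_7 (f : ℕ → ℝ) (hf1 : f 1 = 1)
    (hmul : ∀ m n : ℕ, Nat.Coprime m n → f (m * n) = f m * f n)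
    (hnonneg : ∀ n, 0 ≤ f n) (B : ℝ) (hB : 0 < B)
    (h2 : ∀ P K : ℕ,
      ∑ p ∈ (Finset.range P).filter Nat.Prime,
        ∑ ν ∈ Finset.Icc 2 K, f (p ^ ν) * Real.log ((p : ℝ) ^ ν) / (p : ℝ) ^ ν ≤ B)
    (x : ℝ) (hx : 1 < x) :
    ∑ n ∈ Finset.Icc 1 ⌊x⌋₊, f n / n ≤
      Real.exp (B + ∑ p ∈ (Finset.range (⌊x⌋₊ + 1)).filter Nat.Prime, f p / p) :=
  stmt_7_general f hf1 hmul hnonneg B h2 x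
end

section
/- Let ψ: ℝ → ℝ be a C^∞ function supported in [1/2, 5/2] with 0 ≤ ψ ≤ 1, equal to 1 on [1,2], and satisfying |ψ^{(k+1)}(x)| ≤ C·16^k (k!)² for all x and k ≥ 0 (with an absolute constant C). Then there is a constant C' such that for all real λ, |ψ̂(λ)| ≤ C'·exp(-√|λ|/2), where ψ̂(λ) = ∫ ψ(x) e^{-2πixλ} dx is the Fourier transform. -/
open Real MeasureTheory FourierTransform ContDiff

private lemma my_stirling (k : ℕ) (hk : 1 ≤ k) :
    (k.factorial : ℝ) ≤ Real.exp 1 * (k:ℝ)^(k+1) * Real.exp (-(k:ℝ)) := by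
  induction k with
  | zero => omega
  | succ k ih =>
    rcases Nat.eq_or_lt_of_le hk with h | h
    · simp [← h]
      norm_num [Real.exp_neg]
    · have hk1 : 1 ≤ k := by omega
      have ihk := ih hk1
      have hkpos : (0:ℝ) < k := by exact_mod_cast Nat.pos_of_ne_zero (by omega)
      -- key: exp 1 * k^(k+1) ≤ (k+1)^(k+1)
      have hE : Real.exp (1/((k:ℝ)+1)) * (k:ℝ) ≤ (k:ℝ)+1 := by
        have h0 := Real.add_one_le_exp (-(1/((k:ℝ)+1)))
        have hkk : (0:ℝ) < (k:ℝ)+1 := by linarith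
        have : 1 - 1/((k:ℝ)+1) ≤ Real.exp (-(1/((k:ℝ)+1))) := by linarith
        rw [Real.exp_neg] at this
        have hEpos : 0 < Real.exp (1/((k:ℝ)+1)) := Real.exp_pos _
        have h1 : (1 - 1/((k:ℝ)+1)) * Real.exp (1/((k:ℝ)+1)) ≤ 1 := by
          calc (1 - 1/((k:ℝ)+1)) * Real.exp (1/((k:ℝ)+1))
              ≤ (Real.exp (1/((k:ℝ)+1)))⁻¹ * Real.exp (1/((k:ℝ)+1)) := by
                apply mul_le_mul_of_nonneg_right this hEpos.le
            _ = 1 := inv_mul_cancel₀ hEpos.ne'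
        have hfield : 1 - 1/((k:ℝ)+1) = (k:ℝ)/((k:ℝ)+1) := by field_simp; ring
        rw [hfield] at h1
        have := mul_le_mul_of_nonneg_right h1 hkk.le
        calc Real.exp (1/((k:ℝ)+1)) * (k:ℝ)
            = (k:ℝ)/((k:ℝ)+1) * Real.exp (1/((k:ℝ)+1)) * ((k:ℝ)+1) := by field_simp
          _ ≤ 1 * ((k:ℝ)+1) := this
          _ = (k:ℝ)+1 := one_mul _
      have hkey : Real.exp 1 * (k:ℝ)^(k+1) ≤ ((k:ℝ)+1)^(k+1) := by
        have hpow := pow_le_pow_left₀ (by positivity) hE (k+1)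
        calc Real.exp 1 * (k:ℝ)^(k+1)
            = (Real.exp (1/((k:ℝ)+1)) * (k:ℝ))^(k+1) := by
              rw [mul_pow, ← Real.exp_nat_mul]
              congr 2
              push_cast
              field_simp
          _ ≤ ((k:ℝ)+1)^(k+1) := hpow
      have : ((k+1).factorial : ℝ) = ((k:ℝ)+1) * (k.factorial : ℝ) := by
        push_cast [Nat.factorial_succ]; ring
      rw [this]
      calc ((k:ℝ)+1) * (k.factorial:ℝ)
          ≤ ((k:ℝ)+1) * (Real.exp 1 * (k:ℝ)^(k+1) * Real.exp (-(k:ℝ))) := by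
            apply mul_le_mul_of_nonneg_left ihk (by linarith)
        _ = (Real.exp 1 * (k:ℝ)^(k+1)) * (((k:ℝ)+1) * Real.exp (-(k:ℝ))) := by ring
        _ ≤ ((k:ℝ)+1)^(k+1) * (((k:ℝ)+1) * Real.exp (-(k:ℝ))) := by
            apply mul_le_mul_of_nonneg_right hkey (by positivity)
        _ = Real.exp 1 * ((k:ℝ)+1)^(k+1+1) * (Real.exp (-(k:ℝ)) / Real.exp 1) := by
            rw [pow_succ]; field_simp; ring
        _ = Real.exp 1 * ((k:ℝ)+1)^(k+1+1) * Real.exp (-((k:ℝ)+1)) := by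
            rw [← Real.exp_sub]; ring_nf
        _ = Real.exp 1 * (((k:ℕ)+1:ℕ):ℝ)^(k+1+1) * Real.exp (-(((k:ℕ)+1:ℕ):ℝ)) := by push_cast; ring

private lemma my_numeric (C s : ℝ) (hC : 0 ≤ C) (k : ℕ) (hk0 : 1 ≤ k)
    (hk1 : 4*(k:ℝ) ≤ s) (hk2 : s < 4*((k:ℝ)+1)) (a : ℝ) (ha : 0 ≤ a)
    (hmain : a * (s^2)^(k+1) ≤ 2*C*16^k*((k.factorial:ℝ))^2) :
    a ≤ (2*C*Real.exp 4) * Real.exp (-s/2) := by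
  have hkpos : (0:ℝ) < k := by exact_mod_cast hk0
  have hk1' : (1:ℝ) ≤ (k:ℝ) := by exact_mod_cast hk0
  have hs : 4 ≤ s := by linarith
  have hspos : (0:ℝ) < s := by linarith
  have hX : (0:ℝ) < (s^2)^(k+1) := by positivity
  have hfact := my_stirling k hk0
  have hfact2 : ((k.factorial:ℝ))^2 ≤ (Real.exp 1 * (k:ℝ)^(k+1) * Real.exp (-(k:ℝ)))^2 :=
    pow_le_pow_left₀ (by positivity) hfact 2
  have hpows : (16:ℝ)^k * ((k:ℝ)^(k+1))^2 ≤ (s^2)^(k+1) := by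
    have e1 : (16:ℝ)^k * ((k:ℝ)^(k+1))^2 = ((4*(k:ℝ))^2)^k * (k:ℝ)^2 := by
      rw [← pow_mul (4*(k:ℝ)) 2 k, mul_pow, ← pow_mul (k:ℝ) (k+1) 2]
      rw [show (4:ℝ)^(2*k) = 16^k by rw [pow_mul]; norm_num]
      rw [show (k+1)*2 = 2*k+2 by ring, pow_add]
      ring
    rw [e1, pow_succ]
    have h1 : ((4*(k:ℝ))^2)^k ≤ (s^2)^k := by
      apply pow_le_pow_left₀ (by positivity)
      apply pow_le_pow_left₀ (by positivity) hk1
    have h2 : (k:ℝ)^2 ≤ s^2 := by nlinarith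
    exact mul_le_mul h1 h2 (sq_nonneg _) (pow_nonneg (sq_nonneg _) _)
  have hexp : Real.exp 1 ^ 2 * Real.exp (-(k:ℝ)) ^ 2 ≤ Real.exp 4 * Real.exp (-s/2) := by
    rw [show Real.exp 1 ^2 = Real.exp 2 by rw [← Real.exp_nat_mul]; norm_num,
        show Real.exp (-(k:ℝ)) ^2 = Real.exp (-2*(k:ℝ)) by rw [← Real.exp_nat_mul]; ring_nf,
        ← Real.exp_add, ← Real.exp_add]
    apply Real.exp_le_exp.mpr
    linarith
  have hchain : 2*C*16^k*((k.factorial:ℝ))^2 ≤ (2*C*Real.exp 4*Real.exp (-s/2)) * (s^2)^(k+1) := by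
    calc 2*C*16^k*((k.factorial:ℝ))^2
        ≤ 2*C*16^k*(Real.exp 1 * (k:ℝ)^(k+1) * Real.exp (-(k:ℝ)))^2 := by
          apply mul_le_mul_of_nonneg_left hfact2 (by positivity)
      _ = 2*C*(Real.exp 1 ^2 * Real.exp (-(k:ℝ))^2) * ((16:ℝ)^k * ((k:ℝ)^(k+1))^2) := by ring
      _ ≤ 2*C*(Real.exp 4 * Real.exp (-s/2)) * ((s^2)^(k+1)) := by
          apply mul_le_mul (mul_le_mul_of_nonneg_left hexp (by positivity)) hpows
            (by positivity) (by positivity)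
      _ = (2*C*Real.exp 4*Real.exp (-s/2)) * (s^2)^(k+1) := by ring
  have := le_trans hmain hchain
  exact le_of_mul_le_mul_right (by linarith [this]) hX

set_option maxHeartbeats 1000000 in
/-- Exponential decay of the Fourier transform of a smooth bump function with
factorially controlled derivative bounds: `|ψ̂(λ)| ≪ exp(-√|λ|/2)`. -/
theorem stmt_10 (ψ : ℝ → ℝ) (C : ℝ) (hsmooth : ContDiff ℝ (⊤ : ℕ∞) ψ)
    (hsupp : Function.support ψ ⊆ Set.Icc (1 / 2) (5 / 2))
    (hrange : ∀ x, 0 ≤ ψ x ∧ ψ x ≤ 1)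
    (hone : ∀ x ∈ Set.Icc (1 : ℝ) 2, ψ x = 1)
    (hderiv : ∀ (k : ℕ) (x : ℝ),
      |iteratedDeriv (k + 1) ψ x| ≤ C * 16 ^ k * ((Nat.factorial k : ℝ)) ^ 2) :
    ∃ C' : ℝ, ∀ ξ : ℝ,
      ‖∫ x : ℝ, (ψ x : ℂ) * Complex.exp (-2 * (Real.pi : ℂ) * Complex.I * (x : ℂ) * (ξ : ℂ))‖
        ≤ C' * Real.exp (-Real.sqrt |ξ| / 2) := by
  set F : ℝ → ℂ := fun x => (ψ x : ℂ) with hF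
  have hsmooth' : ContDiff ℝ ∞ ψ := hsmooth.of_le (by simp)
  have hC : 0 ≤ C := le_trans (abs_nonneg _) (by simpa using hderiv 0 0)
  have hψn : ∀ n, ContDiff ℝ ∞ (iteratedDeriv n ψ) := fun n => by
    rw [iteratedDeriv_eq_iterate]; exact hsmooth'.iterate_deriv n
  have hFsmooth : ContDiff ℝ ∞ F :=
    (Complex.ofRealCLM.contDiff : ContDiff ℝ ∞ (fun x : ℝ => (x : ℂ))).comp hsmooth'
  have hid : ∀ n, iteratedDeriv n F = fun x => ((iteratedDeriv n ψ x : ℝ) : ℂ) := by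
    intro n; induction n with
    | zero => simp [hF]
    | succ n ih =>
      funext x
      rw [iteratedDeriv_succ, ih, iteratedDeriv_succ]
      exact (((hψn n).differentiable (by simp) x).hasDerivAt.ofReal_comp).deriv
  have hsupp_n : ∀ n, Function.support (iteratedDeriv n ψ) ⊆ Set.Icc (1/2 : ℝ) (5/2) := by
    intro n; induction n with
    | zero => simpa using hsupp
    | succ n ih =>
      rw [iteratedDeriv_succ]
      exact support_deriv_subset.trans (closure_minimal ih isClosed_Icc)
  have hint : ∀ n, Integrable (iteratedDeriv n F) := by
    intro n
    rw [hid n]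
    apply Continuous.integrable_of_hasCompactSupport
    · exact Complex.continuous_ofReal.comp (hψn n).continuous
    · have hcs : HasCompactSupport (iteratedDeriv n ψ) :=
        HasCompactSupport.intro isCompact_Icc
          (fun x hx => by
            by_contra h
            exact hx (hsupp_n n (Function.mem_support.mpr h)))
      exact HasCompactSupport.comp_left (g := Complex.ofReal) hcs Complex.ofReal_zero
  -- L¹ bound
  have key : ∀ (n : ℕ) (M : ℝ) (ξ : ℝ), (∀ x, |iteratedDeriv n ψ x| ≤ M) →
      (2*π*|ξ|)^n * ‖𝓕 F ξ‖ ≤ 2*M := by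
    intro n M ξ hM
    have h1 : 𝓕 (iteratedDeriv n F) = fun ξ : ℝ => (2*π*Complex.I*ξ)^n • 𝓕 F ξ :=
      Real.fourier_iteratedDeriv (N := (⊤:ℕ∞)) hFsmooth (fun m _ => hint m) le_top
    have h2 : ‖𝓕 (iteratedDeriv n F) ξ‖ = (2*π*|ξ|)^n * ‖𝓕 F ξ‖ := by
      rw [h1]
      simp only [norm_smul, norm_pow]
      congr 2
      simp [Complex.norm_real, Real.norm_eq_abs, abs_of_pos Real.pi_pos]
    rw [← h2]
    calc ‖𝓕 (iteratedDeriv n F) ξ‖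
        ≤ ∫ x, ‖iteratedDeriv n F x‖ :=
          VectorFourier.norm_fourierIntegral_le_integral_norm _ _ _ _ _
      _ ≤ ∫ x, (Set.Icc (1/2 : ℝ) (5/2)).indicator (fun _ => M) x := by
          apply integral_mono (hint n).norm ((integrableOn_const measure_Icc_lt_top.ne).integrable_indicator measurableSet_Icc)
          intro x
          rw [hid n]
          by_cases hx : x ∈ Set.Icc (1/2 : ℝ) (5/2)
          · rw [Set.indicator_of_mem hx]
            simpa using hM x
          · rw [Set.indicator_of_notMem hx]
            have : iteratedDeriv n ψ x = 0 := by
              by_contra h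
              exact hx (hsupp_n n (Function.mem_support.mpr h))
            simp [this]
      _ = 2*M := by
          rw [integral_indicator_const _ measurableSet_Icc, Real.volume_real_Icc]
          norm_num [ENNReal.toReal_ofReal]
  -- the statement integral is 𝓕 F ξ
  have hFeq : ∀ ξ : ℝ,
      (∫ x : ℝ, (ψ x : ℂ) * Complex.exp (-2 * (Real.pi : ℂ) * Complex.I * (x : ℂ) * (ξ : ℂ)))
        = 𝓕 F ξ := by
    intro ξ
    rw [Real.fourier_real_eq_integral_exp_smul]
    congr 1
    funext x
    rw [smul_eq_mul, mul_comm]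
    congr 1
    push_cast
    ring
  refine ⟨2*Real.exp 2 + 2*C*Real.exp 4, fun ξ => ?_⟩
  rw [hFeq ξ]
  have hnn : (0:ℝ) ≤ ‖𝓕 F ξ‖ := norm_nonneg _
  have hψbd : ∀ x, |ψ x| ≤ 1 := fun x => abs_le.mpr ⟨by linarith [(hrange x).1], (hrange x).2⟩
  have htriv : ‖𝓕 F ξ‖ ≤ 2 := by simpa using key 0 1 ξ (by simpa using hψbd)
  by_cases hξ : |ξ| ≤ 16
  · have hsq : Real.sqrt |ξ| ≤ 4 := by
      rw [show (4:ℝ) = Real.sqrt 16 by rw [show (16:ℝ) = 4^2 by norm_num, Real.sqrt_sq]; norm_num]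
      exact Real.sqrt_le_sqrt hξ
    have : Real.exp (-Real.sqrt |ξ| / 2) ≥ Real.exp (-2) := by
      apply Real.exp_le_exp.mpr; linarith
    have h2 : 2 ≤ 2*Real.exp 2 * Real.exp (-Real.sqrt |ξ| / 2) := by
      calc (2:ℝ) = 2*Real.exp 2 * Real.exp (-2) := by
            rw [mul_assoc, ← Real.exp_add]; norm_num
        _ ≤ 2*Real.exp 2 * Real.exp (-Real.sqrt |ξ| / 2) := by
            apply mul_le_mul_of_nonneg_left this (by positivity)
    calc ‖𝓕 F ξ‖ ≤ 2 := htriv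
      _ ≤ 2*Real.exp 2 * Real.exp (-Real.sqrt |ξ| / 2) := h2
      _ ≤ (2*Real.exp 2 + 2*C*Real.exp 4) * Real.exp (-Real.sqrt |ξ| / 2) := by
          apply mul_le_mul_of_nonneg_right _ (Real.exp_pos _).le
          nlinarith [Real.exp_pos (4:ℝ)]
  · push_neg at hξ
    set s := Real.sqrt |ξ| with hs
    have hs2 : s^2 = |ξ| := Real.sq_sqrt (abs_nonneg ξ)
    have hs4 : 4 ≤ s := by
      rw [show (4:ℝ) = Real.sqrt 16 by rw [show (16:ℝ) = 4^2 by norm_num, Real.sqrt_sq]; norm_num]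
      exact Real.sqrt_le_sqrt hξ.le
    set k : ℕ := ⌊s/4⌋₊ with hk
    have hk0 : 1 ≤ k := Nat.le_floor (by push_cast; linarith)
    have hk1 : 4*(k:ℝ) ≤ s := by
      have := Nat.floor_le (by positivity : (0:ℝ) ≤ s/4)
      linarith
    have hk2 : s < 4*((k:ℝ)+1) := by
      have := Nat.lt_floor_add_one (s/4)
      linarith
    -- main estimate with n = k+1
    have hmain0 := key (k+1) (C * 16^k * ((k.factorial:ℝ))^2) ξ (hderiv k)
    have hpi : (1:ℝ) ≤ 2*π := by nlinarith [Real.pi_gt_three]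
    have hstep : ‖𝓕 F ξ‖ * (s^2)^(k+1) ≤ 2*C*16^k*((k.factorial:ℝ))^2 := by
      have h1 : (s^2)^(k+1) ≤ (2*π*|ξ|)^(k+1) := by
        apply pow_le_pow_left₀ (by positivity)
        rw [hs2]
        nlinarith [abs_nonneg ξ]
      calc ‖𝓕 F ξ‖ * (s^2)^(k+1) ≤ ‖𝓕 F ξ‖ * (2*π*|ξ|)^(k+1) :=
            mul_le_mul_of_nonneg_left h1 hnn
        _ = (2*π*|ξ|)^(k+1) * ‖𝓕 F ξ‖ := mul_comm _ _
        _ ≤ 2*(C * 16^k * ((k.factorial:ℝ))^2) := hmain0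
        _ = 2*C*16^k*((k.factorial:ℝ))^2 := by ring
    have := my_numeric C s hC k hk0 hk1 hk2 _ hnn hstep
    calc ‖𝓕 F ξ‖ ≤ (2*C*Real.exp 4) * Real.exp (-s/2) := this
      _ ≤ (2*Real.exp 2 + 2*C*Real.exp 4) * Real.exp (-s/2) := by
          apply mul_le_mul_of_nonneg_right _ (Real.exp_pos _).le
          nlinarith [Real.exp_pos (2:ℝ)]
      _ = (2*Real.exp 2 + 2*C*Real.exp 4) * Real.exp (-Real.sqrt |ξ| / 2) := by
          rw [hs]
end

section
/- Let a, b, c, d be positive integers such that a, b, and cd are pairwise coprime. Denoting by x*_q the multiplicative inverse of x modulo q, one has the congruence (acd)*_b / b ≡ 1/(abcd) - (bcd)*_a / a - (ab)*_{cd} / (cd) (mod 1), i.e., acd·(acd)*_b ≡ 1 - bcd·(bcd)*_a - ab·(ab)*_{cd} (mod abcd). -/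
/-!
The three terms `bcd·(bcd)*_a`, `acd·(acd)*_b`, `ab·(ab)*_{cd}` are the Chinese-remainder
idempotents for the coprime moduli `a`, `b`, `cd`: each is `≡ 1` modulo its own modulus and
`≡ 0` modulo the other two. Their sum is therefore `≡ 1` modulo each of `a`, `b`, `cd`, hence
modulo the product `abcd`.
-/

theorem Int.ModEq.mul_of_isCoprime {m n x y : ℤ} (hmn : IsCoprime m n)
    (hm : x ≡ y [ZMOD m]) (hn : x ≡ y [ZMOD n]) : x ≡ y [ZMOD m * n] :=
  (Int.modEq_and_modEq_iff_modEq_mul (Int.isCoprime_iff_gcd_eq_one.mp hmn)).1 ⟨hm, hn⟩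

theorem Int.add_add_modEq_one_of_modEq_inverse {p q r u v w : ℤ}
    (hpq : IsCoprime p q) (hpr : IsCoprime p r) (hqr : IsCoprime q r)
    (hu : q * r * u ≡ 1 [ZMOD p]) (hv : p * r * v ≡ 1 [ZMOD q]) (hw : p * q * w ≡ 1 [ZMOD r]) :
    q * r * u + p * r * v + p * q * w ≡ 1 [ZMOD p * q * r] := by
  have hp : q * r * u + p * r * v + p * q * w ≡ 1 + 0 + 0 [ZMOD p] :=
    (hu.add ((Int.modEq_zero_iff_dvd).2 ⟨r * v, by ring⟩)).add
      ((Int.modEq_zero_iff_dvd).2 ⟨q * w, by ring⟩)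
  have hq : q * r * u + p * r * v + p * q * w ≡ 0 + 1 + 0 [ZMOD q] :=
    (((Int.modEq_zero_iff_dvd).2 ⟨r * u, by ring⟩).add hv).add
      ((Int.modEq_zero_iff_dvd).2 ⟨p * w, by ring⟩)
  have hr : q * r * u + p * r * v + p * q * w ≡ 0 + 0 + 1 [ZMOD r] :=
    (((Int.modEq_zero_iff_dvd).2 ⟨q * u, by ring⟩).add
      ((Int.modEq_zero_iff_dvd).2 ⟨p * v, by ring⟩)).add hw
  simp only [add_zero, zero_add] at hp hq hr
  exact ((hp.mul_of_isCoprime hpq hq).mul_of_isCoprime (hpr.mul_left hqr) hr)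

theorem stmt_15_general (a b c d u v w : ℤ)
    (hab : IsCoprime a b) (hacd : IsCoprime a (c * d)) (hbcd : IsCoprime b (c * d))
    (hu : a * c * d * u ≡ 1 [ZMOD b])
    (hv : b * c * d * v ≡ 1 [ZMOD a])
    (hw : a * b * w ≡ 1 [ZMOD c * d]) :
    a * c * d * u ≡ 1 - b * c * d * v - a * b * w [ZMOD a * b * c * d] := by
  have hsum := Int.add_add_modEq_one_of_modEq_inverse (u := v) (v := u) (w := w) hab hacd hbcd
    (by convert hv using 2; ring) (by convert hu using 2; ring) hw
  rw [← mul_assoc] at hsum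
  have := hsum.sub_right (b * c * d * v + a * b * w)
  convert this using 1 <;> ring

/-- If `a`, `b`, `cd` are pairwise coprime and `u, v, w` are inverses of
`acd mod b`, `bcd mod a`, `ab mod cd` respectively, then
`acd·(acd)*_b ≡ 1 - bcd·(bcd)*_a - ab·(ab)*_{cd} (mod abcd)`. -/
theorem stmt_15 (a b c d u v w : ℤ) (ha : 0 < a) (hb : 0 < b) (hc : 0 < c) (hd : 0 < d)
    (hab : IsCoprime a b) (hacd : IsCoprime a (c * d)) (hbcd : IsCoprime b (c * d))
    (hu : a * c * d * u ≡ 1 [ZMOD b])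
    (hv : b * c * d * v ≡ 1 [ZMOD a])
    (hw : a * b * w ≡ 1 [ZMOD c * d]) :
    a * c * d * u ≡ 1 - b * c * d * v - a * b * w [ZMOD a * b * c * d] :=
  stmt_15_general a b c d u v w hab hacd hbcd hu hv hw
end

section
/- Let a, b, c, d, e be positive integers with a, b, cd pairwise coprime and (cd, e) = 1. Then (abe)*_c / c - (ab)*_{cd} / (cd) ≡ (d - e)·(abe)*_{cd} / (cd) (mod 1), where x*_q denotes the multiplicative inverse of x modulo q. -/
/-! Multiplying by `abe`, the left side becomes `d·(abe·c₁) - e·(ab·w) ≡ d - e (mod cd)`, where the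
first term uses that `abe·c₁ ≡ 1 (mod c)` lifts to `d·abe·c₁ ≡ d (mod cd)`. Multiplying back by
the inverse `u` of `abe` gives `(d - e)·u`. -/

theorem Int.ModEq.modEq_mul_of_mul_modEq {n a u x y : ℤ} (hu : a * u ≡ 1 [ZMOD n])
    (h : a * x ≡ y [ZMOD n]) : x ≡ u * y [ZMOD n] :=
  calc x = 1 * x := (one_mul x).symm
    _ ≡ a * u * x [ZMOD n] := (hu.mul_right x).symm
    _ = u * (a * x) := by ring
    _ ≡ u * y [ZMOD n] := h.mul_left u

theorem stmt_16_general (a b c d e c₁ w u : ℤ)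
    (hc₁ : a * b * e * c₁ ≡ 1 [ZMOD c])
    (hw : a * b * w ≡ 1 [ZMOD c * d])
    (hu : a * b * e * u ≡ 1 [ZMOD c * d]) :
    d * c₁ - w ≡ (d - e) * u [ZMOD c * d] := by
  have hdc₁ : a * b * e * c₁ * d ≡ 1 * d [ZMOD c * d] := hc₁.mul_right'
  have hew : a * b * w * e ≡ 1 * e [ZMOD c * d] := hw.mul_right e
  have key : a * b * e * (d * c₁ - w) ≡ d - e [ZMOD c * d] :=
    calc a * b * e * (d * c₁ - w) = a * b * e * c₁ * d - a * b * w * e := by ring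
      _ ≡ 1 * d - 1 * e [ZMOD c * d] := hdc₁.sub hew
      _ = d - e := by ring
  rw [mul_comm (d - e)]
  exact hu.modEq_mul_of_mul_modEq key

/-- If `a`, `b`, `cd` are pairwise coprime, `(cd, e) = 1`, and `c₁, w, u` are
inverses of `abe mod c`, `ab mod cd`, `abe mod cd` respectively, then
`d·(abe)*_c - (ab)*_{cd} ≡ (d-e)·(abe)*_{cd} (mod cd)`. -/
theorem stmt_16 (a b c d e c₁ w u : ℤ) (ha : 0 < a) (hb : 0 < b) (hc : 0 < c)
    (hd : 0 < d) (he : 0 < e)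
    (hab : IsCoprime a b) (hacd : IsCoprime a (c * d)) (hbcd : IsCoprime b (c * d))
    (hcde : IsCoprime (c * d) e)
    (hc₁ : a * b * e * c₁ ≡ 1 [ZMOD c])
    (hw : a * b * w ≡ 1 [ZMOD c * d])
    (hu : a * b * e * u ≡ 1 [ZMOD c * d]) :
    d * c₁ - w ≡ (d - e) * u [ZMOD c * d] :=
  stmt_16_general a b c d e c₁ w u hc₁ hw hu
end

section
/- Let f: ℝᵐ → ℂ be continuously differentiable in each variable and let c: ℤᵐ → ℂ. For real K_i < L_i define S = ∑_{K_i < ℓ_i ≤ L_i, 1≤i≤m} c(ℓ)f(ℓ) and C(x) = ∑_{K_i < ℓ_i ≤ x_i} c(ℓ). Then S = C(L)f(L) + ∑_{s=1}^{m} (-1)^s ∑_{1 ≤ i₁ < ⋯ < i_s ≤ m} ∫_{K_{i₁}}^{L_{i₁}} ⋯ ∫_{K_{i_s}}^{L_{i_s}} C(b)·(∂^s f/∂x_{i₁}⋯∂x_{i_s})(b) dx_{i₁}⋯dx_{i_s}, where b has coordinates b_k = x_k if k ∈ {i₁,…,i_s} and b_k = L_k otherwise. -/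
open MeasureTheory Finset

variable {m : ℕ}

instance uniqSing (i : Fin m) : Unique {k // k ∈ ({i} : Finset (Fin m))} :=
  ⟨⟨⟨i, Finset.mem_singleton_self i⟩⟩, fun x => Subtype.ext (Finset.mem_singleton.1 x.2)⟩

def insEqv (i : Fin m) (S : Finset (Fin m)) :
    {k // k ∈ ({i} : Finset (Fin m)) ∪ S} ≃ {k // k ∈ insert i S} :=
  Equiv.subtypeEquivRight (fun k => by simp [Finset.mem_insert])

noncomputable def eqvE (i : Fin m) (S : Finset (Fin m)) (hi : i ∉ S) :
    (ℝ × ({k // k ∈ S} → ℝ)) ≃ᵐ ({k // k ∈ insert i S} → ℝ) :=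
  ((MeasurableEquiv.piUnique
      (fun _ : {k // k ∈ ({i} : Finset (Fin m))} => ℝ)).symm.prodCongr
      (MeasurableEquiv.refl _)).trans <|
    (MeasurableEquiv.piFinsetUnion (fun _ => ℝ)
        (Finset.disjoint_singleton_left.2 hi)).trans <|
      MeasurableEquiv.piCongrLeft (fun _ : {k // k ∈ insert i S} => ℝ) (insEqv i S)

theorem eqvE_mp (i : Fin m) (S : Finset (Fin m)) (hi : i ∉ S) :
    MeasurePreserving (eqvE i S hi) volume volume := by
  have h1 : MeasurePreserving
      (Prod.map (⇑(MeasurableEquiv.piUnique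
        (fun _ : {k // k ∈ ({i} : Finset (Fin m))} => ℝ)).symm)
        (id : ({k // k ∈ S} → ℝ) → _)) volume volume :=
    (((volume_preserving_piUnique _).symm _)).prod (MeasurePreserving.id _)
  have h2 := volume_preserving_piFinsetUnion (fun _ : Fin m => ℝ)
      (Finset.disjoint_singleton_left.2 hi)
  have h3 := volume_measurePreserving_piCongrLeft
      (fun _ : {k // k ∈ insert i S} => ℝ) (insEqv i S)
  have hfun : ⇑(eqvE i S hi)
      = ⇑(MeasurableEquiv.piCongrLeft (fun _ : {k // k ∈ insert i S} => ℝ) (insEqv i S))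
        ∘ ⇑(MeasurableEquiv.piFinsetUnion (fun _ : Fin m => ℝ)
            (Finset.disjoint_singleton_left.2 hi))
        ∘ (Prod.map (⇑(MeasurableEquiv.piUnique
            (fun _ : {k // k ∈ ({i} : Finset (Fin m))} => ℝ)).symm)
          (id : ({k // k ∈ S} → ℝ) → _)) := rfl
  rw [hfun]
  exact h3.comp (h2.comp h1)

theorem eqvE_apply (i : Fin m) (S : Finset (Fin m)) (hi : i ∉ S) (t : ℝ)
    (y : {k // k ∈ S} → ℝ) (k : Fin m) (hk : k ∈ insert i S) :
    eqvE i S hi (t, y) ⟨k, hk⟩ = if h : k ∈ S then y ⟨k, h⟩ else t := by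
  have hd := Finset.disjoint_singleton_left.2 hi
  have hk' : k ∈ ({i} : Finset (Fin m)) ∪ S := by
    simpa using hk
  have hA : ∀ j, (MeasurableEquiv.piUnique
      (fun _ : {k // k ∈ ({i} : Finset (Fin m))} => ℝ)).symm t j = t := by
    intro j
    rw [Unique.eq_default j]
    exact congrFun rfl _
  have step1 : eqvE i S hi (t, y) ⟨k, hk⟩
      = (MeasurableEquiv.piFinsetUnion (fun _ : Fin m => ℝ) hd)
          ((MeasurableEquiv.piUnique
            (fun _ : {k // k ∈ ({i} : Finset (Fin m))} => ℝ)).symm t, y) ⟨k, hk'⟩ := by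
    show (Equiv.piCongrLeft (fun _ : {k // k ∈ insert i S} => ℝ) (insEqv i S))
        ((MeasurableEquiv.piFinsetUnion (fun _ : Fin m => ℝ) hd)
            ((MeasurableEquiv.piUnique
              (fun _ : {k // k ∈ ({i} : Finset (Fin m))} => ℝ)).symm t, y))
        (insEqv i S ⟨k, hk'⟩) = _
    rw [Equiv.piCongrLeft_apply_apply]
  rw [step1]
  show (Equiv.piFinsetUnion (fun _ : Fin m => ℝ) hd) (_, y) ⟨k, hk'⟩ = _
  by_cases h : k ∈ S
  · have : (⟨k, hk'⟩ : {x // x ∈ ({i} : Finset (Fin m)) ∪ S})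
        = (Equiv.Finset.union {i} S hd) (Sum.inr ⟨k, h⟩) := rfl
    rw [this]
    unfold Equiv.piFinsetUnion
    rw [Equiv.trans_apply, Equiv.piCongrLeft_sumInr]
    simp [h]
  · have hks : k ∈ ({i} : Finset (Fin m)) := by
      rcases Finset.mem_union.1 hk' with h1 | h1
      · exact h1
      · exact absurd h1 h
    have : (⟨k, hk'⟩ : {x // x ∈ ({i} : Finset (Fin m)) ∪ S})
        = (Equiv.Finset.union {i} S hd) (Sum.inl ⟨k, hks⟩) := rfl
    rw [this]
    unfold Equiv.piFinsetUnion
    rw [Equiv.trans_apply, Equiv.piCongrLeft_sumInl]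
    simp [h, hA]

theorem fubini_step (i : Fin m) (S : Finset (Fin m)) (hi : i ∉ S) (a L : Fin m → ℝ)
    (g : (Fin m → ℝ) → ℂ) (hg : Continuous g) :
    (∫ y : {k // k ∈ insert i S} → ℝ in
        Set.univ.pi (fun j : {k // k ∈ insert i S} => Set.Icc (a j.1) (L j.1)),
        g (fun k => if h : k ∈ insert i S then y ⟨k, h⟩ else L k))
    = ∫ t in Set.Icc (a i) (L i),
        ∫ y : {k // k ∈ S} → ℝ in
          Set.univ.pi (fun j : {k // k ∈ S} => Set.Icc (a j.1) (L j.1)),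
          g (Function.update (fun k => if h : k ∈ S then y ⟨k, h⟩ else L k) i t) := by
  set e := eqvE i S hi with he
  have hmp := eqvE_mp i S hi
  set B := Set.univ.pi (fun j : {k // k ∈ insert i S} => Set.Icc (a j.1) (L j.1)) with hB
  have hpre : ⇑e ⁻¹' B
      = Set.Icc (a i) (L i) ×ˢ
        Set.univ.pi (fun j : {k // k ∈ S} => Set.Icc (a j.1) (L j.1)) := by
    ext ⟨t, y⟩
    simp only [Set.mem_preimage, hB, Set.mem_pi, Set.mem_univ, forall_true_left,
      Set.mem_prod]
    constructor
    · intro h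
      refine ⟨?_, fun j => ?_⟩
      · have := h ⟨i, Finset.mem_insert_self i S⟩
        rwa [eqvE_apply, dif_neg hi] at this
      · have := h ⟨j.1, Finset.mem_insert_of_mem j.2⟩
        rwa [eqvE_apply, dif_pos j.2] at this
    · rintro ⟨h1, h2⟩ j
      rw [eqvE_apply]
      by_cases hj : j.1 ∈ S
      · rw [dif_pos hj]; exact h2 ⟨j.1, hj⟩
      · rw [dif_neg hj]
        have : j.1 = i := by
          rcases Finset.mem_insert.1 j.2 with h | h
          · exact h
          · exact absurd h hj
        rw [this]; exact h1
  have hcomp : ∀ (z : ℝ × ({k // k ∈ S} → ℝ)),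
      (fun k => if h : k ∈ insert i S then (e z) ⟨k, h⟩ else L k)
      = Function.update (fun k => if h : k ∈ S then z.2 ⟨k, h⟩ else L k) i z.1 := by
    rintro ⟨t, y⟩
    funext k
    rw [Function.update_apply]
    by_cases hk : k ∈ insert i S
    · rw [dif_pos hk, eqvE_apply]
      by_cases hks : k ∈ S
      · have hki : k ≠ i := fun h => hi (h ▸ hks)
        rw [dif_pos hks, if_neg hki, dif_pos hks]
      · rw [dif_neg hks]
        have : k = i := by
          rcases Finset.mem_insert.1 hk with h | h
          · exact h
          · exact absurd h hks
        rw [if_pos this]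
    · have hks : k ∉ S := fun h => hk (Finset.mem_insert_of_mem h)
      have hki : k ≠ i := fun h => hk (h ▸ Finset.mem_insert_self i S)
      rw [dif_neg hk, if_neg hki, dif_neg hks]
  rw [← hmp.setIntegral_preimage_emb e.measurableEmbedding
    (fun y => g (fun k => if h : k ∈ insert i S then y ⟨k, h⟩ else L k)) B]
  have : ∀ z : ℝ × ({k // k ∈ S} → ℝ),
      g (fun k => if h : k ∈ insert i S then (e z) ⟨k, h⟩ else L k)
      = g (Function.update (fun k => if h : k ∈ S then z.2 ⟨k, h⟩ else L k) i z.1) := by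
    intro z; rw [hcomp]
  simp only [← he, this, hpre]
  have hcont : Continuous (fun z : ℝ × ({k // k ∈ S} → ℝ) =>
      g (Function.update (fun k => if h : k ∈ S then z.2 ⟨k, h⟩ else L k) i z.1)) := by
    apply hg.comp
    apply continuous_pi
    intro k
    simp only [Function.update_apply]
    by_cases hk : k = i
    · simpa [hk] using continuous_fst
    · simp only [if_neg hk]
      by_cases hks : k ∈ S
      · simp only [dif_pos hks]
        exact (continuous_apply _).comp continuous_snd
      · simp only [dif_neg hks]; exact continuous_const
  have hint : IntegrableOn (fun z : ℝ × ({k // k ∈ S} → ℝ) =>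
      g (Function.update (fun k => if h : k ∈ S then z.2 ⟨k, h⟩ else L k) i z.1))
      (Set.Icc (a i) (L i) ×ˢ
        Set.univ.pi (fun j : {k // k ∈ S} => Set.Icc (a j.1) (L j.1))) := by
    apply hcont.continuousOn.integrableOn_compact
    exact (isCompact_Icc).prod (isCompact_univ_pi (fun _ => isCompact_Icc))
  rw [Measure.volume_eq_prod]
  rw [Measure.volume_eq_prod] at hint
  exact MeasureTheory.setIntegral_prod _ hint

instance isEmptyEmptyFinset : IsEmpty {k // k ∈ (∅ : Finset (Fin m))} :=
  ⟨fun x => Finset.notMem_empty _ x.2⟩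

theorem box_empty (a L : Fin m → ℝ) :
    Set.univ.pi (fun j : {k // k ∈ (∅ : Finset (Fin m))} => Set.Icc (a j.1) (L j.1))
      = Set.univ := by
  apply Set.eq_univ_iff_forall.2
  intro y j
  exact isEmptyElim j

theorem integral_empty_box (a L : Fin m → ℝ) (φ : (Fin m → ℝ) → ℂ) :
    (∫ y : {k // k ∈ (∅ : Finset (Fin m))} → ℝ in
        Set.univ.pi (fun j : {k // k ∈ (∅ : Finset (Fin m))} => Set.Icc (a j.1) (L j.1)),
        φ (fun k => if h : k ∈ (∅ : Finset (Fin m)) then y ⟨k, h⟩ else L k)) = φ L := by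
  rw [box_empty, Measure.restrict_univ]
  have h1 : ∀ y : {k // k ∈ (∅ : Finset (Fin m))} → ℝ,
      (fun k => if h : k ∈ (∅ : Finset (Fin m)) then y ⟨k, h⟩ else L k) = L := by
    intro y; funext k; simp
  simp only [h1]
  have hvol : (volume : Measure ({k // k ∈ (∅ : Finset (Fin m))} → ℝ))
      = Measure.dirac (fun a => isEmptyElim a) := by
    rw [show (volume : Measure ({k // k ∈ (∅ : Finset (Fin m))} → ℝ))
        = Measure.pi (fun _ => volume) from rfl, Measure.pi_of_empty]
  rw [hvol, integral_dirac]

theorem abel_aux (L : Fin m → ℝ) (T : Finset (Fin m)) :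
    ∀ (D : Finset (Fin m) → (Fin m → ℝ) → ℂ),
      (∀ S, Continuous (D S)) →
      (∀ (S : Finset (Fin m)), ∀ i ∈ T, i ∉ S → ∀ x : Fin m → ℝ,
        HasDerivAt (fun t => D S (Function.update x i t)) (D (insert i S) x) (x i)) →
      ∀ a : Fin m → ℝ, (∀ k, a k ≤ L k) → (∀ k ∉ T, a k = L k) →
      D ∅ a = ∑ S ∈ T.powerset, (-1 : ℂ) ^ S.card *
        ∫ y : {k // k ∈ S} → ℝ in
          Set.univ.pi (fun j : {k // k ∈ S} => Set.Icc (a j.1) (L j.1)),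
          D S (fun k => if h : k ∈ S then y ⟨k, h⟩ else L k) := by
  induction T using Finset.induction with
  | empty =>
    intro D hDcont hDderiv a ha haT
    rw [Finset.powerset_empty, Finset.sum_singleton, integral_empty_box]
    have : a = L := funext fun k => haT k (Finset.notMem_empty k)
    rw [this]
    simp
  | @insert i T' hi IH =>
    intro D hDcont hDderiv a ha haT
    have hai : a i ≤ L i := ha i
    set a' := Function.update a i (L i) with ha'def
    have ha' : ∀ k, a' k ≤ L k := by
      intro k
      by_cases hk : k = i
      · subst hk; simp [ha'def]
      · rw [ha'def, Function.update_of_ne hk]; exact ha k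
    have haT' : ∀ k ∉ T', a' k = L k := by
      intro k hk
      by_cases hki : k = i
      · subst hki; simp [ha'def]
      · rw [ha'def, Function.update_of_ne hki]
        exact haT k (by simp [Finset.mem_insert, hki, hk])
    have hDderiv' : ∀ (S : Finset (Fin m)), ∀ j ∈ T', j ∉ S → ∀ x : Fin m → ℝ,
        HasDerivAt (fun t => D S (Function.update x j t)) (D (insert j S) x) (x j) :=
      fun S j hj => hDderiv S j (Finset.mem_insert_of_mem hj)
    -- box bound rewriting : for S ⊆ T', a' agrees with a on S
    have hbox : ∀ S ∈ T'.powerset,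
        (fun j : {k // k ∈ S} => Set.Icc (a' j.1) (L j.1))
          = (fun j : {k // k ∈ S} => Set.Icc (a j.1) (L j.1)) := by
      intro S hS
      funext j
      have hji : j.1 ≠ i := fun h => hi (h ▸ Finset.mem_powerset.1 hS j.2)
      rw [ha'def, Function.update_of_ne hji]
    -- IH applied at a'
    have IH1 : D ∅ a' = ∑ S ∈ T'.powerset, (-1 : ℂ) ^ S.card *
        ∫ y : {k // k ∈ S} → ℝ in
          Set.univ.pi (fun j : {k // k ∈ S} => Set.Icc (a j.1) (L j.1)),
          D S (fun k => if h : k ∈ S then y ⟨k, h⟩ else L k) := by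
      rw [IH D hDcont hDderiv' a' ha' haT']
      exact Finset.sum_congr rfl fun S hS => by rw [hbox S hS]
    -- IH applied to the i-derivative family
    have IH2 : ∀ t : ℝ, D {i} (Function.update a i t)
        = ∑ S ∈ T'.powerset, (-1 : ℂ) ^ S.card *
          ∫ y : {k // k ∈ S} → ℝ in
            Set.univ.pi (fun j : {k // k ∈ S} => Set.Icc (a j.1) (L j.1)),
            D (insert i S)
              (Function.update (fun k => if h : k ∈ S then y ⟨k, h⟩ else L k) i t) := by
      intro t
      have hcont' : ∀ S, Continuous
          (fun x : Fin m → ℝ => D (insert i S) (Function.update x i t)) :=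
        fun S => (hDcont _).comp (continuous_id.update i continuous_const)
      have hderiv' : ∀ (S : Finset (Fin m)), ∀ j ∈ T', j ∉ S → ∀ x : Fin m → ℝ,
          HasDerivAt (fun s => D (insert i S) (Function.update (Function.update x j s) i t))
            (D (insert i (insert j S)) (Function.update x i t)) (x j) := by
        intro S j hj hjS x
        have hji : j ≠ i := fun h => hi (h ▸ hj)
        have h := hDderiv (insert i S) j (Finset.mem_insert_of_mem hj)
          (by simp [Finset.mem_insert, hji, hjS]) (Function.update x i t)
        rw [Function.update_of_ne hji] at h
        have hfun : (fun s => D (insert i S)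
              (Function.update (Function.update x j s) i t))
            = (fun s => D (insert i S)
              (Function.update (Function.update x i t) j s)) := by
          funext s
          rw [Function.update_comm hji]
        rw [hfun, Finset.insert_comm]
        exact h
      calc D {i} (Function.update a i t)
          = (fun S x => D (insert i S) (Function.update x i t)) ∅ a' := by
            show D {i} (Function.update a i t) = D (insert i ∅) (Function.update a' i t)
            rw [ha'def, Function.update_idem, Finset.insert_empty]
        _ = ∑ S ∈ T'.powerset, (-1 : ℂ) ^ S.card *
              ∫ y : {k // k ∈ S} → ℝ in
                Set.univ.pi (fun j : {k // k ∈ S} => Set.Icc (a' j.1) (L j.1)),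
                D (insert i S)
                  (Function.update (fun k => if h : k ∈ S then y ⟨k, h⟩ else L k) i t) :=
            IH (fun S x => D (insert i S) (Function.update x i t)) hcont' hderiv' a' ha' haT'
        _ = ∑ S ∈ T'.powerset, (-1 : ℂ) ^ S.card *
              ∫ y : {k // k ∈ S} → ℝ in
                Set.univ.pi (fun j : {k // k ∈ S} => Set.Icc (a j.1) (L j.1)),
                D (insert i S)
                  (Function.update (fun k => if h : k ∈ S then y ⟨k, h⟩ else L k) i t) :=
            Finset.sum_congr rfl fun S hS => by rw [hbox S hS]
    -- FTC in coordinate i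
    have hftc : D ∅ a = D ∅ a'
        - ∫ t in Set.Icc (a i) (L i), D {i} (Function.update a i t) := by
      have hderiv_t : ∀ t ∈ Set.uIcc (a i) (L i),
          HasDerivAt (fun s => D ∅ (Function.update a i s))
            (D {i} (Function.update a i t)) t := by
        intro t _
        have h := hDderiv ∅ i (Finset.mem_insert_self i T') (Finset.notMem_empty i)
          (Function.update a i t)
        simp only [Function.update_idem, Function.update_self] at h
        exact h
      have hcont_t : IntervalIntegrable
          (fun t => D {i} (Function.update a i t)) volume (a i) (L i) :=
        ((hDcont {i}).comp (continuous_const.update i continuous_id)).intervalIntegrable _ _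
      have h := intervalIntegral.integral_eq_sub_of_hasDerivAt hderiv_t hcont_t
      rw [intervalIntegral.integral_of_le hai, ← integral_Icc_eq_integral_Ioc] at h
      rw [h]
      simp [ha'def, Function.update_eq_self]
    rw [hftc, IH1]
    simp only [IH2]
    -- swap sum and integral
    have hintS : ∀ S ∈ T'.powerset, IntegrableOn
        (fun t => (-1 : ℂ) ^ S.card *
          ∫ y : {k // k ∈ S} → ℝ in
            Set.univ.pi (fun j : {k // k ∈ S} => Set.Icc (a j.1) (L j.1)),
            D (insert i S)
              (Function.update (fun k => if h : k ∈ S then y ⟨k, h⟩ else L k) i t))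
        (Set.Icc (a i) (L i)) := by
      intro S hS
      apply Integrable.const_mul
      have hjoint : IntegrableOn
          (fun z : ℝ × ({k // k ∈ S} → ℝ) => D (insert i S)
            (Function.update (fun k => if h : k ∈ S then z.2 ⟨k, h⟩ else L k) i z.1))
          (Set.Icc (a i) (L i) ×ˢ
            Set.univ.pi (fun j : {k // k ∈ S} => Set.Icc (a j.1) (L j.1))) := by
        apply Continuous.continuousOn ?_ |>.integrableOn_compact
          (isCompact_Icc.prod (isCompact_univ_pi fun _ => isCompact_Icc))
        apply (hDcont _).comp
        apply continuous_pi
        intro k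
        simp only [Function.update_apply]
        by_cases hk : k = i
        · simpa [hk] using continuous_fst
        · simp only [if_neg hk]
          by_cases hks : k ∈ S
          · simp only [dif_pos hks]
            exact (continuous_apply _).comp continuous_snd
          · simp only [dif_neg hks]; exact continuous_const
      rw [IntegrableOn, Measure.volume_eq_prod, ← Measure.prod_restrict] at hjoint
      exact hjoint.integral_prod_left
    rw [MeasureTheory.integral_finset_sum _ hintS]
    -- rewrite each summand via Fubini backwards
    have hterm : ∀ S ∈ T'.powerset,
        (∫ t in Set.Icc (a i) (L i), (-1 : ℂ) ^ S.card *
          ∫ y : {k // k ∈ S} → ℝ in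
            Set.univ.pi (fun j : {k // k ∈ S} => Set.Icc (a j.1) (L j.1)),
            D (insert i S)
              (Function.update (fun k => if h : k ∈ S then y ⟨k, h⟩ else L k) i t))
        = (-1 : ℂ) ^ S.card *
          ∫ y : {k // k ∈ insert i S} → ℝ in
            Set.univ.pi (fun j : {k // k ∈ insert i S} => Set.Icc (a j.1) (L j.1)),
            D (insert i S) (fun k => if h : k ∈ insert i S then y ⟨k, h⟩ else L k) := by
      intro S hS
      have hiS : i ∉ S := fun h => hi (Finset.mem_powerset.1 hS h)
      rw [MeasureTheory.integral_const_mul,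
        fubini_step i S hiS a L (D (insert i S)) (hDcont _)]
    rw [Finset.sum_congr rfl hterm]
    rw [Finset.sum_powerset_insert hi, sub_eq_add_neg, ← Finset.sum_neg_distrib]
    congr 1
    apply Finset.sum_congr rfl
    intro S hS
    have hiS : i ∉ S := fun h => hi (Finset.mem_powerset.1 hS h)
    rw [Finset.card_insert_of_notMem hiS]
    ring


/-- Multidimensional Abel summation: for a sequence `c : ℤᵐ → ℂ` and a function
`f` continuously differentiable in each variable (with mixed partial derivatives
given by the family `D`, `D ∅ = f`),
`∑_{K_i < ℓ_i ≤ L_i} c(ℓ) f(ℓ) = C(L) f(L) + ∑_{∅ ≠ S ⊆ {1,…,m}} (-1)^{|S|}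
∫⋯∫ C(b) ∂^S f(b) dx_S`, where `b` agrees with the integration variables on `S`
and equals `L` off `S`, and `C(x) = ∑_{K_i < ℓ_i ≤ x_i} c(ℓ)`. -/
theorem stmt_17 (m : ℕ) (f : (Fin m → ℝ) → ℂ) (c : (Fin m → ℤ) → ℂ)
    (K L : Fin m → ℝ) (hKL : ∀ i, K i < L i)
    (D : Finset (Fin m) → (Fin m → ℝ) → ℂ)
    (hD0 : D ∅ = f)
    (hDcont : ∀ S, Continuous (D S))
    (hDderiv : ∀ (S : Finset (Fin m)) (i : Fin m), i ∉ S → ∀ x : Fin m → ℝ,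
      HasDerivAt (fun t => D S (Function.update x i t)) (D (insert i S) x) (x i)) :
    (∑ ℓ ∈ Fintype.piFinset (fun i => Finset.Icc (⌊K i⌋ + 1) ⌊L i⌋),
        c ℓ * f (fun i => (ℓ i : ℝ)))
      = (∑ ℓ ∈ Fintype.piFinset (fun i => Finset.Icc (⌊K i⌋ + 1) ⌊L i⌋), c ℓ) * f L
        + ∑ S ∈ (Finset.univ : Finset (Finset (Fin m))).filter (· ≠ ∅),
            (-1 : ℂ) ^ S.card *
              ∫ y : { i // i ∈ S } → ℝ in
                  Set.univ.pi (fun i : { i // i ∈ S } => Set.Icc (K i.1) (L i.1)),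
                (∑ ℓ ∈ Fintype.piFinset (fun i => Finset.Icc (⌊K i⌋ + 1)
                      ⌊(fun k => if h : k ∈ S then y ⟨k, h⟩ else L k) i⌋), c ℓ) *
                  D S (fun k => if h : k ∈ S then y ⟨k, h⟩ else L k) := by
  classical
  subst hD0
  set big := Fintype.piFinset (fun i => Finset.Icc (⌊K i⌋ + 1) ⌊L i⌋) with hbig
  -- membership facts
  have hmem : ∀ ℓ ∈ big, ∀ i, ⌊K i⌋ + 1 ≤ ℓ i ∧ ℓ i ≤ ⌊L i⌋ := by
    intro ℓ hℓ i
    have := Fintype.mem_piFinset.1 hℓ i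
    exact Finset.mem_Icc.1 this
  have hKl : ∀ ℓ ∈ big, ∀ i, K i ≤ (ℓ i : ℝ) := by
    intro ℓ hℓ i
    have h1 := (hmem ℓ hℓ i).1
    have h2 : K i < ((⌊K i⌋ + 1 : ℤ) : ℝ) := by
      push_cast
      exact Int.lt_floor_add_one (K i)
    exact le_trans h2.le (by exact_mod_cast h1)
  have hlL : ∀ ℓ ∈ big, ∀ i, (ℓ i : ℝ) ≤ L i := by
    intro ℓ hℓ i
    exact le_trans (by exact_mod_cast (hmem ℓ hℓ i).2) (Int.floor_le (L i))
  -- Step A : pointwise Abel identity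
  have hptw : ∀ ℓ ∈ big,
      D ∅ (fun i => (ℓ i : ℝ)) = ∑ S ∈ (Finset.univ : Finset (Fin m)).powerset,
        (-1 : ℂ) ^ S.card *
        ∫ y : {k // k ∈ S} → ℝ in
          Set.univ.pi (fun j : {k // k ∈ S} => Set.Icc ((ℓ j.1 : ℝ)) (L j.1)),
          D S (fun k => if h : k ∈ S then y ⟨k, h⟩ else L k) := by
    intro ℓ hℓ
    exact abel_aux L Finset.univ D hDcont (fun S i _ hiS => hDderiv S i hiS)
      (fun i => (ℓ i : ℝ)) (hlL ℓ hℓ) (fun k hk => absurd (Finset.mem_univ k) hk)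
  calc (∑ ℓ ∈ big, c ℓ * D ∅ (fun i => (ℓ i : ℝ)))
      = ∑ ℓ ∈ big, ∑ S ∈ (Finset.univ : Finset (Fin m)).powerset,
          c ℓ * ((-1 : ℂ) ^ S.card *
          ∫ y : {k // k ∈ S} → ℝ in
            Set.univ.pi (fun j : {k // k ∈ S} => Set.Icc ((ℓ j.1 : ℝ)) (L j.1)),
            D S (fun k => if h : k ∈ S then y ⟨k, h⟩ else L k)) := by
        apply Finset.sum_congr rfl
        intro ℓ hℓ
        rw [hptw ℓ hℓ, Finset.mul_sum]
    _ = ∑ S ∈ (Finset.univ : Finset (Fin m)).powerset, ∑ ℓ ∈ big,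
          c ℓ * ((-1 : ℂ) ^ S.card *
          ∫ y : {k // k ∈ S} → ℝ in
            Set.univ.pi (fun j : {k // k ∈ S} => Set.Icc ((ℓ j.1 : ℝ)) (L j.1)),
            D S (fun k => if h : k ∈ S then y ⟨k, h⟩ else L k)) := Finset.sum_comm
    _ = ∑ S ∈ (Finset.univ : Finset (Fin m)).powerset,
          (-1 : ℂ) ^ S.card *
          ∫ y : {k // k ∈ S} → ℝ in
            Set.univ.pi (fun j : {k // k ∈ S} => Set.Icc (K j.1) (L j.1)),
            (∑ ℓ ∈ Fintype.piFinset (fun i => Finset.Icc (⌊K i⌋ + 1)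
              ⌊(fun k => if h : k ∈ S then y ⟨k, h⟩ else L k) i⌋), c ℓ) *
            D S (fun k => if h : k ∈ S then y ⟨k, h⟩ else L k) := by
        apply Finset.sum_congr rfl
        intro S _
        have hDScont : Continuous fun y : {k // k ∈ S} → ℝ =>
            D S (fun k => if h : k ∈ S then y ⟨k, h⟩ else L k) := by
          apply (hDcont S).comp
          apply continuous_pi
          intro k
          by_cases hk : k ∈ S
          · simp only [dif_pos hk]; exact continuous_apply _
          · simp only [dif_neg hk]; exact continuous_const
        have hmeas_box : MeasurableSet
            (Set.univ.pi fun j : {k // k ∈ S} => Set.Icc (K j.1) (L j.1)) :=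
          MeasurableSet.univ_pi fun j => measurableSet_Icc
        have hBmeas : ∀ ℓ : Fin m → ℤ, MeasurableSet
            (Set.univ.pi fun j : {k // k ∈ S} => Set.Ici ((ℓ j.1 : ℝ))) :=
          fun ℓ => MeasurableSet.univ_pi fun j => measurableSet_Ici
        have hfs : ∀ y ∈ Set.univ.pi (fun j : {k // k ∈ S} => Set.Icc (K j.1) (L j.1)),
            Fintype.piFinset (fun i => Finset.Icc (⌊K i⌋ + 1)
              ⌊(fun k => if h : k ∈ S then y ⟨k, h⟩ else L k) i⌋)
            = big.filter (fun ℓ => ∀ j : {k // k ∈ S}, (ℓ j.1 : ℝ) ≤ y j) := by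
          intro y hy
          have hyL : ∀ j : {k // k ∈ S}, y j ≤ L j.1 := fun j => (hy j (Set.mem_univ _)).2
          ext ℓ
          simp only [Fintype.mem_piFinset, Finset.mem_filter, Finset.mem_Icc, hbig]
          constructor
          · intro h
            refine ⟨fun i => ⟨(h i).1, ?_⟩, fun j => ?_⟩
            · by_cases hk : i ∈ S
              · have h2 := (h i).2
                simp only [dif_pos hk] at h2
                exact Int.le_floor.2 (le_trans (Int.le_floor.1 h2) (hyL ⟨i, hk⟩))
              · have h2 := (h i).2
                simp only [dif_neg hk] at h2
                exact h2
            · have h2 := (h j.1).2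
              simp only [dif_pos j.2] at h2
              exact Int.le_floor.1 h2
          · rintro ⟨h1, h2⟩ i
            refine ⟨(h1 i).1, ?_⟩
            by_cases hk : i ∈ S
            · simp only [dif_pos hk]
              exact Int.le_floor.2 (h2 ⟨i, hk⟩)
            · simp only [dif_neg hk]
              exact (h1 i).2
        have hkernel : ∀ y ∈ Set.univ.pi (fun j : {k // k ∈ S} => Set.Icc (K j.1) (L j.1)),
            (∑ ℓ ∈ Fintype.piFinset (fun i => Finset.Icc (⌊K i⌋ + 1)
                ⌊(fun k => if h : k ∈ S then y ⟨k, h⟩ else L k) i⌋), c ℓ) *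
              D S (fun k => if h : k ∈ S then y ⟨k, h⟩ else L k)
            = ∑ ℓ ∈ big, Set.indicator
                (Set.univ.pi fun j : {k // k ∈ S} => Set.Ici ((ℓ j.1 : ℝ)))
                (fun z => c ℓ * D S (fun k => if h : k ∈ S then z ⟨k, h⟩ else L k)) y := by
          intro y hy
          rw [hfs y hy, Finset.sum_filter, Finset.sum_mul]
          apply Finset.sum_congr rfl
          intro ℓ _
          rw [Set.indicator_apply]
          by_cases hp : ∀ j : {k // k ∈ S}, (ℓ j.1 : ℝ) ≤ y j
          · rw [if_pos hp, if_pos]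
            exact fun j _ => hp j
          · rw [if_neg hp, if_neg, zero_mul]
            intro hmem
            exact hp fun j => hmem j (Set.mem_univ _)
        symm
        rw [MeasureTheory.setIntegral_congr_fun hmeas_box hkernel]
        rw [MeasureTheory.integral_finset_sum big (f := fun ℓ =>
            (Set.univ.pi fun j : {k // k ∈ S} => Set.Ici ((ℓ j.1 : ℝ))).indicator
              (fun z => c ℓ * D S (fun k => if h : k ∈ S then z ⟨k, h⟩ else L k))) (fun ℓ _ =>
          ((continuous_const.mul hDScont).continuousOn.integrableOn_compact
            (isCompact_univ_pi fun _ => isCompact_Icc)).indicator (hBmeas ℓ))]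
        rw [Finset.mul_sum]
        apply Finset.sum_congr rfl
        intro ℓ hℓ
        rw [MeasureTheory.setIntegral_indicator (hBmeas ℓ)]
        have hsets : Set.univ.pi (fun j : {k // k ∈ S} => Set.Icc (K j.1) (L j.1))
            ∩ Set.univ.pi (fun j : {k // k ∈ S} => Set.Ici ((ℓ j.1 : ℝ)))
            = Set.univ.pi (fun j : {k // k ∈ S} => Set.Icc ((ℓ j.1 : ℝ)) (L j.1)) := by
          ext y
          simp only [Set.mem_inter_iff, Set.mem_univ_pi, Set.mem_Icc, Set.mem_Ici]
          constructor
          · rintro ⟨h1, h2⟩ j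
            exact ⟨h2 j, (h1 j).2⟩
          · intro h
            exact ⟨fun j => ⟨le_trans (hKl ℓ hℓ j.1) (h j).1, (h j).2⟩, fun j => (h j).1⟩
        rw [hsets, MeasureTheory.integral_const_mul]
        ring
    _ = (∑ ℓ ∈ big, c ℓ) * D ∅ L
        + ∑ S ∈ (Finset.univ : Finset (Finset (Fin m))).filter (· ≠ ∅),
            (-1 : ℂ) ^ S.card *
              ∫ y : { i // i ∈ S } → ℝ in
                  Set.univ.pi (fun i : { i // i ∈ S } => Set.Icc (K i.1) (L i.1)),
                (∑ ℓ ∈ Fintype.piFinset (fun i => Finset.Icc (⌊K i⌋ + 1)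
                      ⌊(fun k => if h : k ∈ S then y ⟨k, h⟩ else L k) i⌋), c ℓ) *
                  D S (fun k => if h : k ∈ S then y ⟨k, h⟩ else L k) := by
        rw [Finset.powerset_univ]
        rw [← Finset.sum_filter_add_sum_filter_not Finset.univ (· = ∅)]
        have h1 : (Finset.univ : Finset (Finset (Fin m))).filter (· = ∅) = {∅} := by
          ext S
          simp
        rw [h1, Finset.sum_singleton]
        have e1 : ((-1 : ℂ) ^ (∅ : Finset (Fin m)).card *
            ∫ y : { k // k ∈ (∅ : Finset (Fin m)) } → ℝ in
                Set.univ.pi (fun j : { k // k ∈ (∅ : Finset (Fin m)) } =>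
                  Set.Icc (K j.1) (L j.1)),
              (∑ ℓ ∈ Fintype.piFinset (fun i => Finset.Icc (⌊K i⌋ + 1)
                    ⌊(fun k => if h : k ∈ (∅ : Finset (Fin m)) then y ⟨k, h⟩ else L k) i⌋),
                  c ℓ) *
                D ∅ (fun k => if h : k ∈ (∅ : Finset (Fin m)) then y ⟨k, h⟩ else L k))
            = (∑ ℓ ∈ big, c ℓ) * D ∅ L := by
          rw [show ((∅ : Finset (Fin m)).card) = 0 from rfl, pow_zero, one_mul]
          exact integral_empty_box K L (fun x =>
            (∑ ℓ ∈ Fintype.piFinset (fun i => Finset.Icc (⌊K i⌋ + 1) ⌊x i⌋), c ℓ) * D ∅ x)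
        rw [e1]
end

section
/- Let Δ be a positive integer. Then ∑_{Δ₁ | Δ^∞, Δ₁ > X} τ(Δ₁)/φ(Δ₁) ≤ (1/√X) · ∏_{p | Δ} (1 + ∑_{ν≥1} (ν+1)√(p^ν)/(p^ν - p^{ν-1})), and consequently ∑_{Δ₁ | Δ^∞, Δ₁ > X} τ(Δ₁)/φ(Δ₁) ≪ τ(Δ)/√X, where the sum runs over positive integers Δ₁ all of whose prime factors divide Δ. -/
/-!
Rankin's trick: for `Δ₁ > X` we have `1 ≤ √(Δ₁/X)`, so the tail is at most `X^{-1/2}` times the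
full sum of the multiplicative function `τ(n)√n/φ(n)` over the `Δ`-smooth numbers, which is the
Euler product of its local factors. At `p^ν` with `ν ≥ 1` the local term is
`(√p/(p-1)) (ν+1) p^{-(ν-1)/2}`, an arithmetico-geometric series in `1/√p`; with `s = √p` the
local factor is `1 + s²(2s-1)/((s+1)(s-1)³) = 1 + O(1/√p)`. It is at most `2` once `p ≥ 16` and at
most `42` always, whence the product is `≤ 21^16 · 2^ω(Δ) ≤ 21^16 τ(Δ)`.
-/

open Real Finset

noncomputable def tauSqrtDivTotient (n : ℕ) : ℝ :=
  n.divisors.card * √n / n.totient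

noncomputable def localFactorTail (p : ℕ) : ℝ :=
  ∑' ν : ℕ, (ν + 2 : ℝ) * √((p : ℝ) ^ (ν + 1)) / ((p : ℝ) ^ (ν + 1) - (p : ℝ) ^ ν)

lemma Real.sqrt_pow_of_nonneg {x : ℝ} (hx : 0 ≤ x) (n : ℕ) : √(x ^ n) = √x ^ n := by
  rw [← sqrt_sq (pow_nonneg (sqrt_nonneg x) n), ← pow_mul, mul_comm n 2, pow_mul, sq_sqrt hx]

lemma Nat.card_divisors_prime_pow {p : ℕ} (hp : p.Prime) (k : ℕ) :
    (p ^ k).divisors.card = k + 1 := by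
  simp [Nat.divisors_prime_pow hp]

lemma Nat.two_pow_card_primeFactors_le_card_divisors {n : ℕ} (hn : n ≠ 0) :
    2 ^ n.primeFactors.card ≤ n.divisors.card := by
  rw [Nat.card_divisors hn, ← prod_const]
  refine prod_le_prod' fun p hp ↦ ?_
  have := (Nat.prime_of_mem_primeFactors hp).factorization_pos_of_dvd hn
    (Nat.dvd_of_mem_primeFactors hp)
  omega

lemma hasSum_add_two_mul_geometric {x : ℝ} (hx : ‖x‖ < 1) :
    HasSum (fun ν : ℕ ↦ (ν + 2 : ℝ) * x ^ ν) ((2 - x) / (1 - x) ^ 2) := by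
  have hx1 : 1 - x ≠ 0 := by
    rw [Real.norm_eq_abs, abs_lt] at hx; linarith
  have h := (hasSum_coe_mul_geometric_of_norm_lt_one hx).add
    ((hasSum_geometric_of_norm_lt_one hx).mul_left 2)
  rw [show (2 - x) / (1 - x) ^ 2 = x / (1 - x) ^ 2 + 2 * (1 - x)⁻¹ by field_simp; ring,
    show (fun ν : ℕ ↦ (ν + 2 : ℝ) * x ^ ν) = fun ν : ℕ ↦ (ν : ℝ) * x ^ ν + 2 * x ^ ν by ext; ring]
  exact h

lemma tauSqrtDivTotient_nonneg (n : ℕ) : 0 ≤ tauSqrtDivTotient n := by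
  unfold tauSqrtDivTotient; positivity

lemma tauSqrtDivTotient_one : tauSqrtDivTotient 1 = 1 := by
  simp [tauSqrtDivTotient]

lemma tauSqrtDivTotient_mul {m n : ℕ} (h : m.Coprime n) :
    tauSqrtDivTotient (m * n) = tauSqrtDivTotient m * tauSqrtDivTotient n := by
  unfold tauSqrtDivTotient
  rw [h.card_divisors_mul, Nat.totient_mul h]
  push_cast
  rw [sqrt_mul (Nat.cast_nonneg m)]
  ring

lemma card_divisors_div_totient_le {n : ℕ} {X : ℝ} (hX : 0 < X) (hn : X ≤ n) :
    (n.divisors.card : ℝ) / n.totient ≤ 1 / √X * tauSqrtDivTotient n := by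
  have hsqrt : 1 ≤ √n / √X := (one_le_div (sqrt_pos.mpr hX)).mpr (sqrt_le_sqrt hn)
  calc (n.divisors.card : ℝ) / n.totient
      ≤ (n.divisors.card : ℝ) / n.totient * (√n / √X) :=
        le_mul_of_one_le_right (by positivity) hsqrt
    _ = 1 / √X * tauSqrtDivTotient n := by unfold tauSqrtDivTotient; ring

section PrimePowers

variable {p : ℕ}

lemma Nat.Prime.one_lt_sqrt (hp : p.Prime) : 1 < √p := by
  simpa using sqrt_lt_sqrt zero_le_one (by exact_mod_cast hp.one_lt)

lemma tauSqrtDivTotient_prime_pow_succ (hp : p.Prime) (ν : ℕ) :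
    tauSqrtDivTotient (p ^ (ν + 1)) =
      (ν + 2 : ℝ) * √((p : ℝ) ^ (ν + 1)) / ((p : ℝ) ^ (ν + 1) - (p : ℝ) ^ ν) := by
  unfold tauSqrtDivTotient
  rw [Nat.card_divisors_prime_pow hp, Nat.totient_prime_pow_succ hp]
  push_cast [hp.one_le]
  ring

lemma tauSqrtDivTotient_prime_pow_succ_eq_geometric (hp : p.Prime) (ν : ℕ) :
    tauSqrtDivTotient (p ^ (ν + 1)) = √p / (p - 1) * ((ν + 2 : ℝ) * (√p)⁻¹ ^ ν) := by
  rw [tauSqrtDivTotient_prime_pow_succ hp, sqrt_pow_of_nonneg (Nat.cast_nonneg p)]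
  have hs1 := hp.one_lt_sqrt
  have hp_sq : (p : ℝ) = √p ^ 2 := (sq_sqrt (Nat.cast_nonneg p)).symm
  set s := √p
  rw [hp_sq, show (s ^ 2) ^ (ν + 1) - (s ^ 2) ^ ν = (s ^ ν) ^ 2 * (s ^ 2 - 1) by ring, inv_pow]
  have : s ^ 2 - 1 ≠ 0 := by nlinarith
  have : s ^ ν ≠ 0 := by positivity
  field_simp
  ring

lemma hasSum_tauSqrtDivTotient_prime_pow_succ (hp : p.Prime) :
    HasSum (fun ν ↦ tauSqrtDivTotient (p ^ (ν + 1)))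
      (√p ^ 2 * (2 * √p - 1) / ((√p + 1) * (√p - 1) ^ 3)) := by
  have hs1 := hp.one_lt_sqrt
  have hinv : ‖(√p)⁻¹‖ < 1 := by
    rw [norm_inv, Real.norm_of_nonneg (sqrt_nonneg _)]; exact inv_lt_one_of_one_lt₀ hs1
  have hval : √p ^ 2 * (2 * √p - 1) / ((√p + 1) * (√p - 1) ^ 3) =
      √p / (p - 1) * ((2 - (√p)⁻¹) / (1 - (√p)⁻¹) ^ 2) := by
    have hp_sq : (p : ℝ) = √p ^ 2 := (sq_sqrt (Nat.cast_nonneg p)).symm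
    set s := √p
    rw [hp_sq]
    have : s - 1 ≠ 0 := by linarith
    have : s ^ 2 - 1 ≠ 0 := by nlinarith
    have : s ≠ 0 := by positivity
    field_simp
    ring
  simp_rw [tauSqrtDivTotient_prime_pow_succ_eq_geometric hp, hval]
  exact (hasSum_add_two_mul_geometric hinv).mul_left _

lemma summable_tauSqrtDivTotient_prime_pow (hp : p.Prime) :
    Summable fun ν ↦ tauSqrtDivTotient (p ^ ν) :=
  (summable_nat_add_iff 1).mp (hasSum_tauSqrtDivTotient_prime_pow_succ hp).summable

lemma localFactorTail_eq (hp : p.Prime) :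
    localFactorTail p = √p ^ 2 * (2 * √p - 1) / ((√p + 1) * (√p - 1) ^ 3) := by
  unfold localFactorTail
  simp_rw [← tauSqrtDivTotient_prime_pow_succ hp]
  exact (hasSum_tauSqrtDivTotient_prime_pow_succ hp).tsum_eq

lemma tsum_tauSqrtDivTotient_prime_pow (hp : p.Prime) :
    ∑' ν, tauSqrtDivTotient (p ^ ν) = 1 + localFactorTail p := by
  rw [(summable_tauSqrtDivTotient_prime_pow hp).tsum_eq_zero_add, pow_zero,
    tauSqrtDivTotient_one, localFactorTail]
  simp_rw [tauSqrtDivTotient_prime_pow_succ hp]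

lemma localFactorTail_nonneg (hp : p.Prime) : 0 ≤ localFactorTail p := by
  rw [localFactorTail_eq hp]
  exact (hasSum_tauSqrtDivTotient_prime_pow_succ hp).nonneg fun _ ↦ tauSqrtDivTotient_nonneg _

lemma localFactorTail_le_41 (hp : p.Prime) : localFactorTail p ≤ 41 := by
  have hs : 141 / 100 ≤ √p := by
    rw [le_sqrt (by norm_num) (Nat.cast_nonneg p)]
    have : (2 : ℝ) ≤ p := by exact_mod_cast hp.two_le
    linarith
  rw [localFactorTail_eq hp, div_le_iff₀ (mul_pos (by linarith) (pow_pos (by linarith) 3))]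
  nlinarith [sq_nonneg (√p - 141 / 100), sq_nonneg (√p - 2), sq_nonneg (√p * √p - 2)]

lemma localFactorTail_le_one (hp : p.Prime) (h16 : 16 ≤ p) : localFactorTail p ≤ 1 := by
  have hs : 4 ≤ √p := by
    rw [le_sqrt (by norm_num) (Nat.cast_nonneg p)]
    exact_mod_cast h16
  rw [localFactorTail_eq hp, div_le_iff₀ (mul_pos (by linarith) (pow_pos (by linarith) 3))]
  nlinarith [mul_nonneg (pow_nonneg (sqrt_nonneg (p : ℝ)) 3) (sub_nonneg.mpr hs)]

end PrimePowers

lemma prod_one_add_localFactorTail_le {n : ℕ} (hn : n ≠ 0) :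
    ∏ p ∈ n.primeFactors, (1 + localFactorTail p) ≤ 21 ^ 16 * (n.divisors.card : ℝ) := by
  have hfactor : ∀ p ∈ n.primeFactors,
      1 + localFactorTail p ≤ (if p < 16 then (21 : ℝ) else 1) * 2 := by
    intro p hp
    have hp := Nat.prime_of_mem_primeFactors hp
    split_ifs with h16
    · linarith [localFactorTail_le_41 hp]
    · linarith [localFactorTail_le_one hp (not_lt.mp h16)]
  have hsmall : ∏ p ∈ n.primeFactors, (if p < 16 then (21 : ℝ) else 1) ≤ 21 ^ 16 := by
    rw [prod_ite, prod_const_one, mul_one, prod_const]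
    refine pow_le_pow_right₀ (by norm_num) ?_
    simpa using card_le_card fun p hp ↦ mem_range.mpr (mem_filter.mp hp).2
  have hω : (2 : ℝ) ^ n.primeFactors.card ≤ n.divisors.card := by
    exact_mod_cast Nat.two_pow_card_primeFactors_le_card_divisors hn
  have hnonneg : ∀ p ∈ n.primeFactors, 0 ≤ 1 + localFactorTail p := fun p hp ↦ by
    linarith [localFactorTail_nonneg (Nat.prime_of_mem_primeFactors hp)]
  calc ∏ p ∈ n.primeFactors, (1 + localFactorTail p)
      ≤ ∏ p ∈ n.primeFactors, (if p < 16 then (21 : ℝ) else 1) * 2 := prod_le_prod hnonneg hfactor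
    _ = (∏ p ∈ n.primeFactors, (if p < 16 then (21 : ℝ) else 1)) * 2 ^ n.primeFactors.card := by
        rw [prod_mul_distrib, prod_const]
    _ ≤ 21 ^ 16 * (n.divisors.card : ℝ) := mul_le_mul hsmall hω (by positivity) (by positivity)

theorem tsum_card_divisors_div_totient_gt_le_eulerProduct (s : Finset ℕ) {X : ℝ} (hX : 0 < X) :
    ∑' n : {n : ℕ // 0 < n ∧ n.primeFactors ⊆ s ∧ X < n},
        ((n : ℕ).divisors.card : ℝ) / (n : ℕ).totient
      ≤ 1 / √X * ∏ p ∈ s with p.Prime, ∑' ν, tauSqrtDivTotient (p ^ ν) := by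
  obtain ⟨-, hEuler⟩ := EulerProduct.summable_and_hasSum_factoredNumbers_prod_filter_prime_tsum
    tauSqrtDivTotient_one tauSqrtDivTotient_mul (fun hp ↦ by
      simpa [abs_of_nonneg (tauSqrtDivTotient_nonneg _)]
        using summable_tauSqrtDivTotient_prime_pow hp) s
  let ι : {n : ℕ // 0 < n ∧ n.primeFactors ⊆ s ∧ X < n} → Nat.factoredNumbers s :=
    fun n ↦ ⟨n, Nat.mem_factoredNumbers_of_primeFactors_subset n.2.1.ne' n.2.2.1⟩
  have hι : Function.Injective ι := fun a b h ↦
    Subtype.ext (congrArg (fun m : Nat.factoredNumbers s ↦ (m : ℕ)) h)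
  have hle : ∀ n : {n : ℕ // 0 < n ∧ n.primeFactors ⊆ s ∧ X < n},
      ((n : ℕ).divisors.card : ℝ) / (n : ℕ).totient ≤ 1 / √X * tauSqrtDivTotient (ι n) :=
    fun n ↦ card_divisors_div_totient_le hX n.2.2.2.le
  have hsum : Summable fun n : Nat.factoredNumbers s ↦ tauSqrtDivTotient n := hEuler.summable
  have hsumι := (hsum.comp_injective hι).mul_left (1 / √X)
  calc _ ≤ ∑' n, 1 / √X * tauSqrtDivTotient (ι n) :=
        (hsumι.of_nonneg_of_le (fun _ ↦ by positivity) hle).tsum_le_tsum hle hsumι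
    _ = 1 / √X * ∑' n, tauSqrtDivTotient (ι n) := tsum_mul_left
    _ ≤ 1 / √X * ∑' m : Nat.factoredNumbers s, tauSqrtDivTotient m :=
        mul_le_mul_of_nonneg_left
          (tsum_comp_le_tsum_of_inj hsum (fun _ ↦ tauSqrtDivTotient_nonneg _) hι) (by positivity)
    _ = _ := by rw [hEuler.tsum_eq]

theorem tsum_card_divisors_div_totient_gt_le (Δ : ℕ) {X : ℝ} (hX : 0 < X) :
    ∑' n : {n : ℕ // 0 < n ∧ n.primeFactors ⊆ Δ.primeFactors ∧ X < n},
        ((n : ℕ).divisors.card : ℝ) / (n : ℕ).totient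
      ≤ 1 / √X * ∏ p ∈ Δ.primeFactors, (1 + localFactorTail p) := by
  have hprimes : {p ∈ Δ.primeFactors | p.Prime} = Δ.primeFactors :=
    filter_true_of_mem fun p ↦ Nat.prime_of_mem_primeFactors
  convert tsum_card_divisors_div_totient_gt_le_eulerProduct Δ.primeFactors hX using 2
  rw [hprimes]
  exact prod_congr rfl fun p hp ↦
    (tsum_tauSqrtDivTotient_prime_pow (Nat.prime_of_mem_primeFactors hp)).symm

/-- Tail estimate over `Δ₁ ∣ Δ^∞`:
`∑_{Δ₁ ∣ Δ^∞, Δ₁ > X} τ(Δ₁)/φ(Δ₁) ≤ X^{-1/2} ∏_{p ∣ Δ} (1 + ∑_{ν ≥ 1} (ν+1)√(p^ν)/(p^ν - p^{ν-1}))`,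
and consequently this sum is `≪ τ(Δ)/√X` with an absolute implied constant. -/
theorem stmt_19 :
    (∀ (Δ : ℕ), 0 < Δ → ∀ X : ℝ, 1 ≤ X →
      ∑' Δ₁ : { n : ℕ // 0 < n ∧ n.primeFactors ⊆ Δ.primeFactors ∧ X < (n : ℝ) },
          (((Δ₁ : ℕ).divisors.card : ℝ) / (Nat.totient (Δ₁ : ℕ) : ℝ))
        ≤ (1 / Real.sqrt X) *
            ∏ p ∈ Δ.primeFactors,
              (1 + ∑' ν : ℕ,
                ((ν + 2 : ℝ) * Real.sqrt ((p : ℝ) ^ (ν + 1)) /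
                  ((p : ℝ) ^ (ν + 1) - (p : ℝ) ^ ν)))) ∧
    ∃ C : ℝ, ∀ (Δ : ℕ), 0 < Δ → ∀ X : ℝ, 1 ≤ X →
      ∑' Δ₁ : { n : ℕ // 0 < n ∧ n.primeFactors ⊆ Δ.primeFactors ∧ X < (n : ℝ) },
          (((Δ₁ : ℕ).divisors.card : ℝ) / (Nat.totient (Δ₁ : ℕ) : ℝ))
        ≤ C * (Δ.divisors.card : ℝ) / Real.sqrt X := by
  refine ⟨fun Δ _ X hX ↦ tsum_card_divisors_div_totient_gt_le Δ (by linarith), 21 ^ 16,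
    fun Δ hΔ X hX ↦ ?_⟩
  calc _ ≤ 1 / √X * ∏ p ∈ Δ.primeFactors, (1 + localFactorTail p) :=
        tsum_card_divisors_div_totient_gt_le Δ (by linarith)
    _ ≤ 1 / √X * (21 ^ 16 * (Δ.divisors.card : ℝ)) :=
        mul_le_mul_of_nonneg_left (prod_one_add_localFactorTail_le hΔ.ne') (by positivity)
    _ = 21 ^ 16 * (Δ.divisors.card : ℝ) / √X := by ring
end
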